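/- arXiv:2305.16988 — 14 statements merged into one kernel-verified Lean document; each statement's English description precedes it below -/
import Mathlib

section
/- Let (Ω, 𝔄, μ) be a probability space, let s⁻, s⁺ be GMSM constants with threshold c⁺, and let f : Ω → ℝ be measurable with CDF F(w) := μ{ω : f(ω) ≤ w}. Define F₊(w) := F(w)/s⁺ if F(w) ≤ c⁺ and F₊(w) := c⁺/s⁺ + (F(w) − c⁺)/s⁻ otherwise; define F₋(w) := F(w)/s⁻ if F(w) ≤ c⁻ and F₋(w) := c⁻/s⁻ + (F(w) − c⁻)/s⁺ otherwise. Then for every probability measure ν on Ω that is absolutely continuous with respect to μ and whose Radon–Nikodym derivative satisfies 1/s⁺ ≤ dν/dμ ≤ 1/s⁻ μ-almost everywhere, one has F₊(w) ≤ ν{ω : f(ω) ≤ w} ≤ F₋(w) for all w ∈ ℝ. -/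
open MeasureTheory

lemma gmsm_key {Ω : Type*} [MeasurableSpace Ω] (μ ν : Measure Ω) [IsProbabilityMeasure μ]
    [IsProbabilityMeasure ν] (hac : ν ≪ μ) (sm sp : ℝ) (hsm0 : 0 < sm) (hsp0 : 0 < sp)
    (hratio : ∀ᵐ ω ∂μ, ENNReal.ofReal (1 / sp) ≤ ν.rnDeriv μ ω ∧
      ν.rnDeriv μ ω ≤ ENNReal.ofReal (1 / sm))
    (A : Set Ω) :
    (1/sp) * (μ A).toReal ≤ (ν A).toReal ∧ (ν A).toReal ≤ (1/sm) * (μ A).toReal := by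
  have hrn : ∫⁻ x in A, ν.rnDeriv μ x ∂μ = ν A := Measure.setLIntegral_rnDeriv hac A
  have h1 : ENNReal.ofReal (1/sp) * μ A ≤ ν A := by
    rw [← hrn, ← setLIntegral_const A (ENNReal.ofReal (1/sp))]
    exact lintegral_mono_ae ((ae_restrict_of_ae hratio).mono fun x h => h.1)
  have h2 : ν A ≤ ENNReal.ofReal (1/sm) * μ A := by
    rw [← hrn, ← setLIntegral_const A (ENNReal.ofReal (1/sm))]
    exact lintegral_mono_ae ((ae_restrict_of_ae hratio).mono fun x h => h.2)
  constructor
  · have := ENNReal.toReal_mono (measure_ne_top ν A) h1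
    rwa [ENNReal.toReal_mul, ENNReal.toReal_ofReal (by positivity)] at this
  · have := ENNReal.toReal_mono
      (ENNReal.mul_ne_top ENNReal.ofReal_ne_top (measure_ne_top μ A)) h2
    rwa [ENNReal.toReal_mul, ENNReal.toReal_ofReal (by positivity)] at this

/-- Validity part of Theorem 1 (Eq. (6)) of the paper, stated measure-theoretically:
for any probability measure `ν ≪ μ` whose density with respect to `μ` lies
in `[1/s⁺, 1/s⁻]` a.e., the CDF of `f` under `ν` is bounded between the
shifted CDFs `F₊` and `F₋`. -/
theorem gmsm_cdf_bounds
    {Ω : Type*} [MeasurableSpace Ω] (μ : Measure Ω) [IsProbabilityMeasure μ]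
    (sm sp : ℝ) (hsm0 : 0 < sm) (hsm1 : sm ≤ 1) (hsp1 : 1 ≤ sp) (hlt : sm < sp)
    (cp cm : ℝ)
    (hcp : cp = (1 - sm) * sp / (sp - sm))
    (hcm : cm = (sp - 1) * sm / (sp - sm))
    (f : Ω → ℝ) (hf : Measurable f)
    (F : ℝ → ℝ) (hF : ∀ w, F w = (μ {ω | f ω ≤ w}).toReal)
    (Fp Fm : ℝ → ℝ)
    (hFp : ∀ w, Fp w = if F w ≤ cp then F w / sp else cp / sp + (F w - cp) / sm)
    (hFm : ∀ w, Fm w = if F w ≤ cm then F w / sm else cm / sm + (F w - cm) / sp)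
    (ν : Measure Ω) [IsProbabilityMeasure ν] (hac : ν ≪ μ)
    (hratio : ∀ᵐ ω ∂μ, ENNReal.ofReal (1 / sp) ≤ ν.rnDeriv μ ω ∧
      ν.rnDeriv μ ω ≤ ENNReal.ofReal (1 / sm)) :
    ∀ w : ℝ, Fp w ≤ (ν {ω | f ω ≤ w}).toReal ∧ (ν {ω | f ω ≤ w}).toReal ≤ Fm w := by
  have hsp0 : (0:ℝ) < sp := lt_of_lt_of_le one_pos hsp1
  have hd : (0:ℝ) < sp - sm := by linarith
  intro w
  set A := {ω | f ω ≤ w} with hAdef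
  have hA : MeasurableSet A := hf measurableSet_Iic
  have k1 := gmsm_key μ ν hac sm sp hsm0 hsp0 hratio A
  have k2 := gmsm_key μ ν hac sm sp hsm0 hsp0 hratio Aᶜ
  set x := (μ A).toReal
  set y := (ν A).toReal
  have hxc : (μ Aᶜ).toReal = 1 - x := by
    rw [measure_compl hA (measure_ne_top μ A), measure_univ,
      ENNReal.toReal_sub_of_le prob_le_one ENNReal.one_ne_top, ENNReal.toReal_one]
  have hyc : (ν Aᶜ).toReal = 1 - y := by
    rw [measure_compl hA (measure_ne_top ν A), measure_univ,
      ENNReal.toReal_sub_of_le prob_le_one ENNReal.one_ne_top, ENNReal.toReal_one]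
  rw [hxc, hyc] at k2
  have hFx : F w = x := hF w
  constructor
  · rw [hFp w, hFx]
    split_ifs with h
    · have : x / sp = (1/sp) * x := by ring
      linarith [k1.1]
    · have heq : cp / sp + (x - cp) / sm = 1 - (1/sm) * (1 - x) := by
        subst hcp; field_simp; ring
      linarith [k2.2]
  · rw [hFm w, hFx]
    split_ifs with h
    · have : x / sm = (1/sm) * x := by ring
      linarith [k1.2]
    · have heq : cm / sm + (x - cm) / sp = 1 - (1/sp) * (1 - x) := by
        subst hcm; field_simp; ring
      linarith [k2.1]
end

section
/- Let P be an atomless probability measure on ℝ with CDF F(w) := P((−∞, w]), and let s⁻, s⁺ be GMSM constants with threshold c⁺. Define g₊ : ℝ → ℝ by g₊(y) := 1/s⁺ if F(y) ≤ c⁺ and g₊(y) := 1/s⁻ otherwise, and define F₊(w) := F(w)/s⁺ if F(w) ≤ c⁺ and F₊(w) := c⁺/s⁺ + (F(w) − c⁺)/s⁻ otherwise. Then: (i) 1/s⁺ ≤ g₊(y) ≤ 1/s⁻ for all y; (ii) ∫ g₊ dP = 1, so the measure ν₊ with density g₊ with respect to P is a probability measure; and (iii) ν₊((−∞, w]) =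 F₊(w) for every w ∈ ℝ. In particular the lower CDF bound F₊ of Theorem 1 is attained by a measure whose density with respect to P lies in [1/s⁺, 1/s⁻]. -/
open MeasureTheory Set Filter Topology

private lemma gmsm_level_set_measure
    (P : Measure ℝ) [IsProbabilityMeasure P] [NullSingletonClass P]
    (F : ℝ → ℝ) (hF : ∀ w, F w = (P (Set.Iic w)).toReal)
    (cp : ℝ) (hcp0 : 0 ≤ cp) (hcp1 : cp ≤ 1) :
    P {y | F y ≤ cp} = ENNReal.ofReal cp := by
  have hPIic : ∀ w, P (Set.Iic w) = ENNReal.ofReal (F w) := fun w => by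
    rw [hF, ENNReal.ofReal_toReal (measure_ne_top P _)]
  have hFmono : Monotone F := fun a b hab => by
    rw [hF, hF]
    exact ENNReal.toReal_mono (measure_ne_top P _)
      (measure_mono (Set.Iic_subset_Iic.mpr hab))
  have hF0 : ∀ w, 0 ≤ F w := fun w => by rw [hF]; exact ENNReal.toReal_nonneg
  have hF1 : ∀ w, F w ≤ 1 := fun w => by
    rw [hF]
    have h := prob_le_one (μ := P) (s := Set.Iic w)
    simpa using ENNReal.toReal_mono (by simp) h
  by_cases h1 : 1 ≤ cp
  · have hce : cp = 1 := le_antisymm hcp1 h1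
    have hAu : {y | F y ≤ cp} = Set.univ :=
      Set.eq_univ_of_forall fun y => (hF1 y).trans h1
    rw [hAu, hce, measure_univ, ENNReal.ofReal_one]
  push_neg at h1
  -- there is a point where F exceeds cp
  have hex : ∃ w, cp < F w := by
    have ht := tendsto_measure_Iic_atTop P
    rw [measure_univ] at ht
    have hev : ∀ᶠ w in atTop, ENNReal.ofReal cp < P (Set.Iic w) :=
      ht.eventually_const_lt (by simpa using ENNReal.ofReal_lt_one.mpr h1)
    obtain ⟨w, hw⟩ := hev.exists
    refine ⟨w, ?_⟩
    rw [hPIic] at hw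
    exact (ENNReal.ofReal_lt_ofReal_iff_of_nonneg hcp0).mp hw
  obtain ⟨W, hW⟩ := hex
  have hbdd : BddAbove {y | F y ≤ cp} := by
    refine ⟨W, fun a ha => ?_⟩
    by_contra h
    push_neg at h
    have := hFmono h.le
    simp only [Set.mem_setOf_eq] at ha
    linarith
  by_cases hne : {y | F y ≤ cp}.Nonempty
  · set q := sSup {y | F y ≤ cp} with hq
    have hsub1 : Set.Iio q ⊆ {y | F y ≤ cp} := by
      intro y hy
      obtain ⟨a, ha, hya⟩ := exists_lt_of_lt_csSup hne hy
      exact le_trans (hFmono hya.le) ha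
    have hsub2 : {y | F y ≤ cp} ⊆ Set.Iic q := fun a ha => le_csSup hbdd ha
    have hio_ic : P (Set.Iio q) = P (Set.Iic q) := measure_congr Iio_ae_eq_Iic
    -- cp ≤ F q, by right continuity
    have hqA : cp ≤ F q := by
      by_contra hqc
      push_neg at hqc
      have hcppos : 0 < cp := lt_of_le_of_lt (hF0 q) hqc
      have hanti : Antitone (fun n : ℕ => Set.Iic (q + 1 / (n + 1 : ℝ))) := by
        intro m n hmn
        apply Set.Iic_subset_Iic.mpr
        have h1 : (1 : ℝ) / (n + 1) ≤ 1 / (m + 1) := by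
          apply one_div_le_one_div_of_le (by positivity)
          exact_mod_cast Nat.succ_le_succ hmn
        linarith
      have hiInter : ⋂ n : ℕ, Set.Iic (q + 1 / (n + 1 : ℝ)) = Set.Iic q := by
        ext y
        simp only [Set.mem_iInter, Set.mem_Iic]
        constructor
        · intro h
          by_contra hc
          push_neg at hc
          obtain ⟨n, hn⟩ := exists_nat_one_div_lt (sub_pos.mpr hc)
          have := h n
          linarith
        · intro h n
          have : (0 : ℝ) < 1 / (n + 1) := by positivity
          linarith
      have hseq := tendsto_measure_iInter_atTop (μ := P)
        (s := fun n : ℕ => Set.Iic (q + 1 / (n + 1 : ℝ)))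
        (fun n => measurableSet_Iic.nullMeasurableSet) hanti ⟨0, measure_ne_top _ _⟩
      rw [hiInter] at hseq
      have hlim : P (Set.Iic q) < ENNReal.ofReal cp := by
        rw [hPIic]
        exact (ENNReal.ofReal_lt_ofReal_iff hcppos).mpr hqc
      obtain ⟨n, hn⟩ := (hseq.eventually_lt_const hlim).exists
      simp only [Function.comp_apply, hPIic] at hn
      have hFn : F (q + 1 / (n + 1 : ℝ)) < cp :=
        (ENNReal.ofReal_lt_ofReal_iff hcppos).mp hn
      have hmem : q + 1 / (n + 1 : ℝ) ∈ {y | F y ≤ cp} := hFn.le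
      have hle := le_csSup hbdd hmem
      have : (0 : ℝ) < 1 / (n + 1) := by positivity
      rw [← hq] at hle
      linarith
    -- P (Iio q) ≤ ofReal cp, by left continuity
    have hio_le : P (Set.Iio q) ≤ ENNReal.ofReal cp := by
      have hmono : Monotone (fun n : ℕ => Set.Iic (q - 1 / (n + 1 : ℝ))) := by
        intro m n hmn
        apply Set.Iic_subset_Iic.mpr
        have h1 : (1 : ℝ) / (n + 1) ≤ 1 / (m + 1) := by
          apply one_div_le_one_div_of_le (by positivity)
          exact_mod_cast Nat.succ_le_succ hmn
        linarith
      have hiUnion : ⋃ n : ℕ, Set.Iic (q - 1 / (n + 1 : ℝ)) = Set.Iio q := by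
        ext y
        simp only [Set.mem_iUnion, Set.mem_Iic, Set.mem_Iio]
        constructor
        · rintro ⟨n, hn⟩
          have : (0 : ℝ) < 1 / (n + 1) := by positivity
          linarith
        · intro hy
          obtain ⟨n, hn⟩ := exists_nat_one_div_lt (sub_pos.mpr hy)
          exact ⟨n, by linarith⟩
      have hseq := tendsto_measure_iUnion_atTop (μ := P) hmono
      rw [hiUnion] at hseq
      refine le_of_tendsto hseq (Eventually.of_forall fun n => ?_)
      have hmem : q - 1 / (n + 1 : ℝ) ∈ Set.Iio q := by
        have : (0 : ℝ) < 1 / (n + 1) := by positivity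
        simp only [Set.mem_Iio]; linarith
      have hFle : F (q - 1 / (n + 1 : ℝ)) ≤ cp := hsub1 hmem
      simp only [Function.comp_apply, hPIic]
      exact ENNReal.ofReal_le_ofReal hFle
    have hup : P {y | F y ≤ cp} ≤ ENNReal.ofReal cp := by
      calc P {y | F y ≤ cp} ≤ P (Set.Iic q) := measure_mono hsub2
        _ = P (Set.Iio q) := hio_ic.symm
        _ ≤ ENNReal.ofReal cp := hio_le
    have hdn : ENNReal.ofReal cp ≤ P {y | F y ≤ cp} := by
      calc ENNReal.ofReal cp ≤ ENNReal.ofReal (F q) := ENNReal.ofReal_le_ofReal hqA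
        _ = P (Set.Iic q) := (hPIic q).symm
        _ = P (Set.Iio q) := hio_ic.symm
        _ ≤ P {y | F y ≤ cp} := measure_mono hsub1
    exact le_antisymm hup hdn
  · -- empty case : cp must be 0
    rw [Set.not_nonempty_iff_eq_empty] at hne
    have hall : ∀ y, cp < F y := by
      intro y
      by_contra h
      push_neg at h
      exact absurd (hne ▸ (h : y ∈ {y | F y ≤ cp})) (Set.notMem_empty y)
    have hiInter : ⋂ x : ℝ, Set.Iic x = (∅ : Set ℝ) := by
      ext y
      simp only [Set.mem_iInter, Set.mem_Iic, Set.mem_empty_iff_false, iff_false, not_forall,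
        not_le]
      exact ⟨y - 1, by linarith⟩
    have htb := tendsto_measure_iInter_atBot (μ := P) (s := fun x : ℝ => Set.Iic x)
      (fun x => measurableSet_Iic.nullMeasurableSet)
      (fun a b hab => Set.Iic_subset_Iic.mpr hab) ⟨0, measure_ne_top _ _⟩
    rw [hiInter, measure_empty] at htb
    have hle : ENNReal.ofReal cp ≤ 0 := by
      refine ge_of_tendsto' htb fun x => ?_
      simp only [Function.comp_apply, hPIic]
      exact ENNReal.ofReal_le_ofReal (hall x).le
    rw [hne, measure_empty, le_zero_iff.mp hle]

/-- Sharpness construction of Theorem 1 of the paper in the continuous-outcome case: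
the maximally right-shifted distribution, obtained by reweighting the atomless
observational distribution `P` by `1/s⁺` below the `c⁺`-quantile and by `1/s⁻` above it,
is a probability measure whose CDF equals the lower CDF bound `F₊`. -/
theorem gmsm_sharpness_continuous
    (P : Measure ℝ) [IsProbabilityMeasure P] [NullSingletonClass P]
    (sm sp : ℝ) (hsm0 : 0 < sm) (hsm1 : sm ≤ 1) (hsp1 : 1 ≤ sp) (hlt : sm < sp)
    (cp : ℝ) (hcp : cp = (1 - sm) * sp / (sp - sm))
    (F : ℝ → ℝ) (hF : ∀ w, F w = (P (Set.Iic w)).toReal)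
    (gp : ℝ → ℝ) (hgp : ∀ y, gp y = if F y ≤ cp then 1 / sp else 1 / sm)
    (Fp : ℝ → ℝ)
    (hFp : ∀ w, Fp w = if F w ≤ cp then F w / sp else cp / sp + (F w - cp) / sm) :
    (∀ y, 1 / sp ≤ gp y ∧ gp y ≤ 1 / sm) ∧
    (∫ y, gp y ∂P = 1) ∧
    IsProbabilityMeasure (P.withDensity (fun y => ENNReal.ofReal (gp y))) ∧
    (∀ w, ((P.withDensity (fun y => ENNReal.ofReal (gp y))) (Set.Iic w)).toReal = Fp w) := by
  have hsp0 : 0 < sp := lt_of_lt_of_le zero_lt_one hsp1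
  have hd : 0 < sp - sm := sub_pos.mpr hlt
  have hcp0 : 0 ≤ cp := by
    rw [hcp]; exact div_nonneg (mul_nonneg (by linarith) hsp0.le) hd.le
  have hcp1 : cp ≤ 1 := by
    rw [hcp, div_le_one hd]; nlinarith
  have hkey : cp / sp + (1 - cp) / sm = 1 := by
    rw [hcp]; field_simp; ring
  have hPIic : ∀ w, P (Set.Iic w) = ENNReal.ofReal (F w) := fun w => by
    rw [hF, ENNReal.ofReal_toReal (measure_ne_top P _)]
  have hFmono : Monotone F := fun a b hab => by
    rw [hF, hF]
    exact ENNReal.toReal_mono (measure_ne_top P _)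
      (measure_mono (Set.Iic_subset_Iic.mpr hab))
  have hF0 : ∀ w, 0 ≤ F w := fun w => by rw [hF]; exact ENNReal.toReal_nonneg
  have hA : P {y | F y ≤ cp} = ENNReal.ofReal cp :=
    gmsm_level_set_measure P F hF cp hcp0 hcp1
  have hAmeas : MeasurableSet {y | F y ≤ cp} := hFmono.measurable measurableSet_Iic
  -- part (i)
  have hpart1 : ∀ y, 1 / sp ≤ gp y ∧ gp y ≤ 1 / sm := by
    intro y
    have h1s : 1 / sp ≤ 1 / sm := one_div_le_one_div_of_le hsm0 hlt.le
    rw [hgp]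
    split_ifs with h
    · exact ⟨le_rfl, h1s⟩
    · exact ⟨h1s, le_rfl⟩
  -- the set-lintegral of the density
  have hlin : ∀ S : Set ℝ, MeasurableSet S →
      ∫⁻ y in S, ENNReal.ofReal (gp y) ∂P
        = ENNReal.ofReal (1 / sp) * P (S ∩ {y | F y ≤ cp})
          + ENNReal.ofReal (1 / sm) * P (S \ {y | F y ≤ cp}) := by
    intro S hS
    rw [← lintegral_inter_add_diff (fun y => ENNReal.ofReal (gp y)) S hAmeas]
    have e1 : ∫⁻ y in S ∩ {y | F y ≤ cp}, ENNReal.ofReal (gp y) ∂P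
        = ∫⁻ _ in S ∩ {y | F y ≤ cp}, ENNReal.ofReal (1 / sp) ∂P :=
      setLIntegral_congr_fun (hS.inter hAmeas)
        (fun y hy => by have h : F y ≤ cp := hy.2; rw [hgp, if_pos h])
    have e2 : ∫⁻ y in S \ {y | F y ≤ cp}, ENNReal.ofReal (gp y) ∂P
        = ∫⁻ _ in S \ {y | F y ≤ cp}, ENNReal.ofReal (1 / sm) ∂P :=
      setLIntegral_congr_fun (hS.diff hAmeas)
        (fun y hy => by have h : ¬ F y ≤ cp := hy.2; rw [hgp, if_neg h])
    rw [e1, e2, setLIntegral_const, setLIntegral_const]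
  have hcompl : P ({y | F y ≤ cp}ᶜ) = ENNReal.ofReal (1 - cp) := by
    rw [measure_compl hAmeas (measure_ne_top _ _), hA, measure_univ,
      ENNReal.ofReal_sub _ hcp0, ENNReal.ofReal_one]
  have htot : ∫⁻ y, ENNReal.ofReal (gp y) ∂P = 1 := by
    rw [← setLIntegral_univ, hlin Set.univ MeasurableSet.univ, Set.univ_inter,
      ← Set.compl_eq_univ_diff, hA, hcompl,
      ← ENNReal.ofReal_mul (by positivity), ← ENNReal.ofReal_mul (by positivity),
      ← ENNReal.ofReal_add (by positivity) (mul_nonneg (by positivity) (by linarith)),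
      show 1 / sp * cp + 1 / sm * (1 - cp) = cp / sp + (1 - cp) / sm by ring,
      hkey, ENNReal.ofReal_one]
  have hgpe : gp = fun y => if F y ≤ cp then 1 / sp else 1 / sm := funext hgp
  have hgm : Measurable gp := by
    rw [hgpe]; exact Measurable.ite hAmeas measurable_const measurable_const
  have hint : ∫ y, gp y ∂P = 1 := by
    have hnn : 0 ≤ᵐ[P] gp := ae_of_all _ fun y => by
      rw [hgp]; split_ifs <;> positivity
    rw [integral_eq_lintegral_of_nonneg_ae hnn hgm.aestronglyMeasurable, htot,
      ENNReal.toReal_one]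
  have hprob : IsProbabilityMeasure (P.withDensity (fun y => ENNReal.ofReal (gp y))) := by
    constructor
    rw [withDensity_apply _ MeasurableSet.univ, Measure.restrict_univ, htot]
  refine ⟨hpart1, hint, hprob, fun w => ?_⟩
  rw [withDensity_apply _ measurableSet_Iic, hlin _ measurableSet_Iic, hFp]
  split_ifs with hw
  · have hsub : Set.Iic w ⊆ {y | F y ≤ cp} := fun y hy => le_trans (hFmono hy) hw
    rw [Set.inter_eq_left.mpr hsub, Set.diff_eq_empty.mpr hsub, measure_empty, mul_zero,
      add_zero, hPIic w, ← ENNReal.ofReal_mul (by positivity),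
      ENNReal.toReal_ofReal (mul_nonneg (by positivity) (hF0 w))]
    ring
  · push_neg at hw
    have hsub : {y | F y ≤ cp} ⊆ Set.Iic w := by
      intro y hy
      by_contra h
      simp only [Set.mem_Iic, not_le] at h
      have := le_trans (hFmono h.le) hy
      exact absurd this (by simp only [Set.mem_setOf_eq] at hy ⊢; linarith)
    have hdiff : P (Set.Iic w \ {y | F y ≤ cp}) = ENNReal.ofReal (F w - cp) := by
      rw [measure_diff hsub hAmeas.nullMeasurableSet (measure_ne_top _ _), hA, hPIic w,
        ← ENNReal.ofReal_sub _ hcp0]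
    rw [Set.inter_eq_right.mpr hsub, hA, hdiff,
      ← ENNReal.ofReal_mul (by positivity), ← ENNReal.ofReal_mul (by positivity),
      ← ENNReal.ofReal_add (mul_nonneg (by positivity) hcp0)
        (mul_nonneg (by positivity) (by linarith)),
      ENNReal.toReal_ofReal (add_nonneg (mul_nonneg (by positivity) hcp0)
        (mul_nonneg (by positivity) (by linarith)))]
    ring
end

section
/- Let (Ω, 𝔄, μ) be a probability space and let s⁻, s⁺ be GMSM constants. For every measurable set A ⊆ Ω with 0 < μ(A) < 1 there exist measurable functions g₁, g₂ : Ω → ℝ, each satisfying 1/s⁺ ≤ gᵢ ≤ 1/s⁻ everywhere and ∫ gᵢ dμ = 1, such that ∫_A g₁ dμ = max( μ(A)/s⁺ , 1 − (1 − μ(A))/s⁻ ) and ∫_A g₂ dμ = min( μ(A)/s⁻ , 1 − (1 − μ(A))/s⁺ ). -/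
open MeasureTheory

lemma gmsm_piecewise_density
    {Ω : Type*} [MeasurableSpace Ω] (μ : Measure Ω) [IsProbabilityMeasure μ]
    (A : Set Ω) (hA : MeasurableSet A)
    (sm sp t p : ℝ) (hp : p = (μ A).toReal) (hp0 : 0 < p) (hp1 : p < 1)
    (hsm0 : 0 < sm) (hsp0 : 0 < sp)
    (h1 : p ≤ sp * t) (h2 : (1 - t) * sm ≤ 1 - p)
    (h3 : t * sm ≤ p) (h4 : 1 - p ≤ (1 - t) * sp) :
    ∃ g : Ω → ℝ, Measurable g ∧ (∀ ω, 1 / sp ≤ g ω ∧ g ω ≤ 1 / sm) ∧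
      (∫ ω, g ω ∂μ = 1) ∧ (∫ ω in A, g ω ∂μ = t) := by
  classical
  set a : ℝ := t / p with ha
  set b : ℝ := (1 - t) / (1 - p) with hb
  have hp1' : (0:ℝ) < 1 - p := by linarith
  refine ⟨A.piecewise (fun _ => a) (fun _ => b), Measurable.piecewise hA
    measurable_const measurable_const, ?_, ?_, ?_⟩
  · intro ω
    by_cases hω : ω ∈ A
    · simp only [Set.piecewise_eq_of_mem _ _ _ hω, ha]
      constructor
      · rw [div_le_div_iff₀ hsp0 hp0]; nlinarith
      · rw [div_le_div_iff₀ hp0 hsm0]; nlinarith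
    · simp only [Set.piecewise_eq_of_notMem _ _ _ hω, hb]
      constructor
      · rw [div_le_div_iff₀ hsp0 hp1']; nlinarith
      · rw [div_le_div_iff₀ hp1' hsm0]; nlinarith
  all_goals {
    have hμAc : (μ Aᶜ).toReal = 1 - p := by
      rw [prob_compl_eq_one_sub hA, hp,
        ENNReal.toReal_sub_of_le prob_le_one ENNReal.one_ne_top, ENNReal.toReal_one]
    have hIA : ∫ ω in A, A.piecewise (fun _ => a) (fun _ => b) ω ∂μ = t := by
      rw [setIntegral_congr_fun hA (g := fun _ => a)
        (fun ω hω => Set.piecewise_eq_of_mem _ _ _ hω), setIntegral_const, measureReal_def, ← hp]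
      rw [smul_eq_mul, ha]; field_simp
    have hIAc : ∫ ω in Aᶜ, A.piecewise (fun _ => a) (fun _ => b) ω ∂μ = 1 - t := by
      rw [setIntegral_congr_fun hA.compl (g := fun _ => b)
        (fun ω hω => Set.piecewise_eq_of_notMem _ _ _ hω), setIntegral_const, measureReal_def, hμAc]
      rw [smul_eq_mul, hb]; field_simp
    have hInt : Integrable (A.piecewise (fun _ => a) (fun _ => b)) μ :=
      Integrable.piecewise hA (integrable_const a).integrableOn
        (integrable_const b).integrableOn
    first
    | (rw [← integral_add_compl hA hInt, hIA, hIAc]; ring)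
    | exact hIA }

/-- Set-level sharpness statement underlying Theorem 1 of the paper: for every
measurable set `A` with `0 < μ(A) < 1`, the extremal values of `∫_A g dμ` over
GMSM-constrained densities `g` are attained. -/
theorem gmsm_set_bounds_sharp
    {Ω : Type*} [MeasurableSpace Ω] (μ : Measure Ω) [IsProbabilityMeasure μ]
    (sm sp : ℝ) (hsm0 : 0 < sm) (hsm1 : sm ≤ 1) (hsp1 : 1 ≤ sp) (hlt : sm < sp)
    (A : Set Ω) (hA : MeasurableSet A) (hA0 : 0 < μ A) (hA1 : μ A < 1) :
    ∃ g₁ g₂ : Ω → ℝ, Measurable g₁ ∧ Measurable g₂ ∧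
      (∀ ω, 1 / sp ≤ g₁ ω ∧ g₁ ω ≤ 1 / sm) ∧
      (∀ ω, 1 / sp ≤ g₂ ω ∧ g₂ ω ≤ 1 / sm) ∧
      (∫ ω, g₁ ω ∂μ = 1) ∧ (∫ ω, g₂ ω ∂μ = 1) ∧
      (∫ ω in A, g₁ ω ∂μ = max ((μ A).toReal / sp) (1 - (1 - (μ A).toReal) / sm)) ∧
      (∫ ω in A, g₂ ω ∂μ = min ((μ A).toReal / sm) (1 - (1 - (μ A).toReal) / sp)) := by
  have hsp0 : (0:ℝ) < sp := lt_of_lt_of_le one_pos hsp1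
  set p : ℝ := (μ A).toReal with hp
  have hμA : μ A ≠ ⊤ := (lt_of_lt_of_le hA1 le_top).ne
  have hp0 : 0 < p := ENNReal.toReal_pos hA0.ne' hμA
  have hp1 : p < 1 := by
    have := (ENNReal.toReal_lt_toReal hμA ENNReal.one_ne_top).mpr hA1
    simpa using this
  have hq0 : (0:ℝ) < 1 - p := by linarith
  set t₁ : ℝ := max (p / sp) (1 - (1 - p) / sm) with ht₁
  set t₂ : ℝ := min (p / sm) (1 - (1 - p) / sp) with ht₂
  -- facts about t₁
  have h11 : p ≤ sp * t₁ := by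
    have := le_max_left (p / sp) (1 - (1 - p) / sm)
    rw [div_le_iff₀ hsp0] at this; linarith
  have h12 : (1 - t₁) * sm ≤ 1 - p := by
    have := le_max_right (p / sp) (1 - (1 - p) / sm)
    have h : 1 - t₁ ≤ (1 - p) / sm := by linarith
    rw [le_div_iff₀ hsm0] at h; linarith
  have h13 : t₁ * sm ≤ p := by
    have h : t₁ ≤ p / sm := by
      apply max_le
      · exact div_le_div_of_nonneg_left hp0.le hsm0 hlt.le
      · rw [le_div_iff₀ hsm0]; nlinarith [div_mul_cancel₀ (1 - p) hsm0.ne']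
    rw [le_div_iff₀ hsm0] at h; linarith
  have h14 : 1 - p ≤ (1 - t₁) * sp := by
    have h : t₁ ≤ 1 - (1 - p) / sp := by
      apply max_le
      · rw [div_le_iff₀ hsp0, sub_mul, div_mul_cancel₀ _ hsp0.ne']; nlinarith
      · have : (1 - p) / sp ≤ (1 - p) / sm :=
          div_le_div_of_nonneg_left hq0.le hsm0 hlt.le
        linarith
    have h' : (1 - p) / sp ≤ 1 - t₁ := by linarith
    rw [div_le_iff₀ hsp0] at h'; linarith
  -- facts about t₂
  have h23 : t₂ * sm ≤ p := by
    have := min_le_left (p / sm) (1 - (1 - p) / sp)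
    rw [le_div_iff₀ hsm0] at this; linarith
  have h24 : 1 - p ≤ (1 - t₂) * sp := by
    have := min_le_right (p / sm) (1 - (1 - p) / sp)
    have h' : (1 - p) / sp ≤ 1 - t₂ := by linarith
    rw [div_le_iff₀ hsp0] at h'; linarith
  have h21 : p ≤ sp * t₂ := by
    have h : p / sp ≤ t₂ := by
      apply le_min
      · exact div_le_div_of_nonneg_left hp0.le hsm0 hlt.le
      · rw [div_le_iff₀ hsp0, sub_mul, div_mul_cancel₀ _ hsp0.ne']; nlinarith
    rw [div_le_iff₀ hsp0] at h; linarith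
  have h22 : (1 - t₂) * sm ≤ 1 - p := by
    have h : 1 - (1 - p) / sm ≤ t₂ := by
      apply le_min
      · rw [sub_le_iff_le_add, ← add_div, le_div_iff₀ hsm0]; linarith
      · have : (1 - p) / sp ≤ (1 - p) / sm :=
          div_le_div_of_nonneg_left hq0.le hsm0 hlt.le
        linarith
    have h' : 1 - t₂ ≤ (1 - p) / sm := by linarith
    rw [le_div_iff₀ hsm0] at h'; linarith
  obtain ⟨g₁, hg₁m, hg₁b, hg₁i, hg₁A⟩ :=
    gmsm_piecewise_density μ A hA sm sp t₁ p hp hp0 hp1 hsm0 hsp0 h11 h12 h13 h14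
  obtain ⟨g₂, hg₂m, hg₂b, hg₂i, hg₂A⟩ :=
    gmsm_piecewise_density μ A hA sm sp t₂ p hp hp0 hp1 hsm0 hsp0 h21 h22 h23 h24
  exact ⟨g₁, g₂, hg₁m, hg₂m, hg₁b, hg₂b, hg₁i, hg₂i, hg₁A, hg₂A⟩
end

section
/- Let p : ℕ → ℝ satisfy p(n) ≥ 0 for all n and ∑ₙ p(n) = 1, and let s⁻, s⁺ be GMSM constants with threshold c⁺. Set F(n) := ∑_{k ≤ n} p(k) and F⁻(n) := ∑_{k < n} p(k). Define P₊ : ℕ → ℝ by: P₊(n) := p(n)/s⁺ if F(n) < c⁺; P₊(n) := p(n)/s⁻ if F⁻(n) > c⁺; and P₊(n) := (c⁺ − F⁻(n))/s⁺ + (F(n) − c⁺)/s⁻ otherwise. Then: (i) p(n)/s⁺ ≤ P₊(n) ≤ p(n)/s⁻ for all n; (ii) ∑ₙ P₊(n) = 1; and (iii) for all n, ∑_{k ≤ n} P₊(k) = max( F(n)/s⁺ , 1 − (1 − F(n))/s⁻ ). -/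
/-- Discrete shifted probability mass function of Theorem 1 (Eq. (5)) of the paper:
`P₊` is a valid pmf, its ratio to `p` lies in `[1/s⁺, 1/s⁻]`, and its CDF equals the
lower CDF bound `max(F(n)/s⁺, 1 − (1 − F(n))/s⁻)`. -/
theorem gmsm_discrete_shifted_pmf
    (p : ℕ → ℝ) (hp : ∀ n, 0 ≤ p n) (hps : Summable p) (hp1 : ∑' n, p n = 1)
    (sm sp : ℝ) (hsm0 : 0 < sm) (hsm1 : sm ≤ 1) (hsp1 : 1 ≤ sp) (hlt : sm < sp)
    (cp : ℝ) (hcp : cp = (1 - sm) * sp / (sp - sm))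
    (F Fminus : ℕ → ℝ)
    (hF : ∀ n, F n = ∑ k ∈ Finset.range (n + 1), p k)
    (hFminus : ∀ n, Fminus n = ∑ k ∈ Finset.range n, p k)
    (Pp : ℕ → ℝ)
    (hPp : ∀ n, Pp n =
      if F n < cp then p n / sp
      else if cp < Fminus n then p n / sm
      else (cp - Fminus n) / sp + (F n - cp) / sm) :
    (∀ n, p n / sp ≤ Pp n ∧ Pp n ≤ p n / sm) ∧
    (∑' n, Pp n = 1) ∧
    (∀ n, ∑ k ∈ Finset.range (n + 1), Pp k =
      max (F n / sp) (1 - (1 - F n) / sm)) := by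
  have hsp0 : (0:ℝ) < sp := lt_of_lt_of_le one_pos hsp1
  have hspm : (0:ℝ) < sp - sm := sub_pos.mpr hlt
  have hcp0 : 0 ≤ cp := by
    rw [hcp]
    exact div_nonneg (mul_nonneg (by linarith) (le_of_lt hsp0)) hspm.le
  -- G(x) = x/sp for x ≤ cp
  have hGle : ∀ x : ℝ, x ≤ cp → max (x / sp) (1 - (1 - x) / sm) = x / sp := by
    intro x hx
    apply max_eq_left
    have h1 : x * (sp - sm) ≤ (1 - sm) * sp := (le_div_iff₀ hspm).mp (hcp ▸ hx)
    have e : (sm - (1 - x)) / sm = 1 - (1 - x) / sm := by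
      rw [sub_div, div_self hsm0.ne']
    rw [← e, div_le_div_iff₀ hsm0 hsp0]
    nlinarith [h1]
  -- G(x) = 1 - (1-x)/sm for cp ≤ x
  have hGge : ∀ x : ℝ, cp ≤ x → max (x / sp) (1 - (1 - x) / sm) = 1 - (1 - x) / sm := by
    intro x hx
    apply max_eq_right
    have h1 : (1 - sm) * sp ≤ x * (sp - sm) := (div_le_iff₀ hspm).mp (hcp ▸ hx)
    have e : (sm - (1 - x)) / sm = 1 - (1 - x) / sm := by
      rw [sub_div, div_self hsm0.ne']
    rw [← e, div_le_div_iff₀ hsp0 hsm0]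
    nlinarith [h1]
  have hFp : ∀ n, F n = Fminus n + p n := by
    intro n
    rw [hF, hFminus, Finset.sum_range_succ]
  have hmono : ∀ n, Fminus n ≤ F n := fun n => by
    rw [hFp n]; linarith [hp n]
  -- Part (i)
  have part1 : ∀ n, p n / sp ≤ Pp n ∧ Pp n ≤ p n / sm := by
    intro n
    rw [hPp n]
    split_ifs with h1 h2
    · exact ⟨le_rfl, div_le_div_of_nonneg_left (hp n) hsm0 hlt.le⟩
    · exact ⟨div_le_div_of_nonneg_left (hp n) hsm0 hlt.le, le_rfl⟩
    · push_neg at h1 h2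
      have e : p n = (cp - Fminus n) + (F n - cp) := by linarith [hFp n]
      constructor
      · have h3 : (F n - cp) / sp ≤ (F n - cp) / sm :=
          div_le_div_of_nonneg_left (by linarith) hsm0 hlt.le
        rw [e, add_div]
        linarith
      · have h3 : (cp - Fminus n) / sp ≤ (cp - Fminus n) / sm :=
          div_le_div_of_nonneg_left (by linarith) hsm0 hlt.le
        have e2 : p n / sm = (cp - Fminus n) / sm + (F n - cp) / sm := by
          rw [e, add_div]
        rw [e2]
        linarith
  -- key step: Pp n = G(F n) - G(Fminus n)
  have hstep : ∀ n, Pp n =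
      max (F n / sp) (1 - (1 - F n) / sm)
        - max (Fminus n / sp) (1 - (1 - Fminus n) / sm) := by
    intro n
    rw [hPp n]
    split_ifs with h1 h2
    · rw [hGle _ (le_of_lt h1), hGle _ (le_trans (hmono n) (le_of_lt h1))]
      rw [div_sub_div_same]
      congr 1
      linarith [hFp n]
    · push_neg at h1
      rw [hGge _ h1, hGge _ (le_of_lt h2)]
      field_simp
      linarith [hFp n]
    · push_neg at h1 h2
      rw [hGge _ h1, hGle _ h2]
      subst hcp
      field_simp
      ring
  -- CDF formula (part iii)
  have part3 : ∀ n, ∑ k ∈ Finset.range (n + 1), Pp k =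
      max (F n / sp) (1 - (1 - F n) / sm) := by
    have hFm0 : Fminus 0 = 0 := by rw [hFminus]; simp
    have hG0 : max (Fminus 0 / sp) (1 - (1 - Fminus 0) / sm) = 0 := by
      rw [hFm0, hGle 0 hcp0, zero_div]
    intro n
    induction n with
    | zero =>
      rw [Finset.sum_range_one, hstep 0, hG0, sub_zero]
    | succ n ih =>
      rw [Finset.sum_range_succ, ih, hstep (n + 1)]
      have hFmF : Fminus (n + 1) = F n := by rw [hFminus, hF]
      rw [hFmF]
      ring
  -- Part (ii)
  have hPnn : ∀ n, 0 ≤ Pp n := fun n =>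
    le_trans (div_nonneg (hp n) hsp0.le) (part1 n).1
  have hPle : ∀ n, Pp n ≤ p n / sm := fun n => (part1 n).2
  have hsum : Summable Pp :=
    Summable.of_nonneg_of_le hPnn hPle (hps.div_const sm)
  have part2 : ∑' n, Pp n = 1 := by
    have hF1 : Filter.Tendsto F Filter.atTop (nhds 1) := by
      have h := hps.hasSum.tendsto_sum_nat
      rw [hp1] at h
      have h2 : Filter.Tendsto (fun n => ∑ k ∈ Finset.range (n + 1), p k)
          Filter.atTop (nhds 1) := by
        exact (Filter.tendsto_add_atTop_iff_nat 1).mpr h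
      have : (fun n => ∑ k ∈ Finset.range (n + 1), p k) = F := by
        funext n; rw [hF]
      rwa [this] at h2
    have hmax : Filter.Tendsto (fun n => max (F n / sp) (1 - (1 - F n) / sm))
        Filter.atTop (nhds 1) := by
      have hlim : max ((1:ℝ) / sp) (1 - (1 - 1) / sm) = 1 := by
        rw [sub_self, zero_div, sub_zero]
        exact max_eq_right (by rw [div_le_one hsp0]; exact hsp1)
      have ha : Filter.Tendsto (fun n => (1:ℝ) - (1 - F n) / sm)
          Filter.atTop (nhds (1 - (1 - 1) / sm)) := by
        apply Filter.Tendsto.const_sub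
        apply Filter.Tendsto.div_const
        exact Filter.Tendsto.const_sub _ hF1
      have hb : Filter.Tendsto (fun n => max (F n / sp) (1 - (1 - F n) / sm))
          Filter.atTop (nhds (max (1 / sp) (1 - (1 - 1) / sm))) :=
        Filter.Tendsto.max (hF1.div_const sp) ha
      rwa [hlim] at hb
    apply HasSum.tsum_eq
    rw [hasSum_iff_tendsto_nat_of_nonneg hPnn]
    rw [← Filter.tendsto_add_atTop_iff_nat 1]
    have : (fun n => ∑ k ∈ Finset.range (n + 1), Pp k)
        = fun n => max (F n / sp) (1 - (1 - F n) / sm) := by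
      funext n; exact part3 n
    rw [this]
    exact hmax
  exact ⟨part1, part2, part3⟩
end

section
/- Let p : ℕ → ℝ satisfy p(n) ≥ 0 for all n and ∑ₙ p(n) = 1, and let s⁻, s⁺ be GMSM constants with threshold c⁺; define P₊ from p, s⁻, s⁺, c⁺ as in Eq. (5) of the paper (P₊(n) := p(n)/s⁺ if ∑_{k ≤ n} p(k) < c⁺; P₊(n) := p(n)/s⁻ if ∑_{k < n} p(k) > c⁺; P₊(n) := (c⁺ − ∑_{k < n} p(k))/s⁺ + (∑_{k ≤ n} p(k) − c⁺)/s⁻ otherwise). Then for every q : ℕ → ℝ with q(k) ≥ 0, ∑ₖ q(k) = 1, and p(k)/s⁺ ≤ q(k) ≤ p(k)/s⁻ for all k, one has ∑_{k ≤ n} q(k) ≥ ∑_{k ≤ n} P₊(k) for every n. That is, P₊ simultaneously minimizes the cumulative distribution function at every point among all feasible reweightings of p. -/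
/-- Discrete optimality (sharpness) part of Theorem 1 of the paper: among all pmfs `q`
whose ratio to `p` is bounded between `1/s⁺` and `1/s⁻`, the shifted pmf `P₊`
simultaneously minimizes the CDF at every point. -/
theorem gmsm_discrete_shifted_pmf_optimal
    (p : ℕ → ℝ) (hp : ∀ n, 0 ≤ p n) (hps : Summable p) (hp1 : ∑' n, p n = 1)
    (sm sp : ℝ) (hsm0 : 0 < sm) (hsm1 : sm ≤ 1) (hsp1 : 1 ≤ sp) (hlt : sm < sp)
    (cp : ℝ) (hcp : cp = (1 - sm) * sp / (sp - sm))
    (Pp : ℕ → ℝ)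
    (hPp : ∀ n, Pp n =
      if (∑ k ∈ Finset.range (n + 1), p k) < cp then p n / sp
      else if cp < ∑ k ∈ Finset.range n, p k then p n / sm
      else (cp - ∑ k ∈ Finset.range n, p k) / sp +
        ((∑ k ∈ Finset.range (n + 1), p k) - cp) / sm)
    (q : ℕ → ℝ) (hq0 : ∀ k, 0 ≤ q k) (hqs : Summable q) (hq1 : ∑' k, q k = 1)
    (hqb : ∀ k, p k / sp ≤ q k ∧ q k ≤ p k / sm) :
    ∀ n, ∑ k ∈ Finset.range (n + 1), Pp k ≤ ∑ k ∈ Finset.range (n + 1), q k := by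
  have hsp0 : (0:ℝ) < sp := lt_of_lt_of_le one_pos hsp1
  have hd : (0:ℝ) < sp - sm := sub_pos.mpr hlt
  have key1 : ∀ x : ℝ, x ≤ cp → 1 - (1 - x)/sm ≤ x/sp := by
    intro x hx
    rw [hcp, le_div_iff₀ hd] at hx
    have e : 1 - (1-x)/sm = (sm - (1-x))/sm := by field_simp
    rw [e, div_le_div_iff₀ hsm0 hsp0]
    nlinarith [hx]
  have key2 : ∀ x : ℝ, cp ≤ x → x/sp ≤ 1 - (1 - x)/sm := by
    intro x hx
    rw [hcp, div_le_iff₀ hd] at hx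
    have e : 1 - (1-x)/sm = (sm - (1-x))/sm := by field_simp
    rw [e, div_le_div_iff₀ hsp0 hsm0]
    nlinarith [hx]
  have main : ∀ n, ∑ k ∈ Finset.range n, Pp k =
      max ((∑ k ∈ Finset.range n, p k) / sp)
          (1 - (1 - ∑ k ∈ Finset.range n, p k)/sm) := by
    intro n
    induction n with
    | zero =>
      simp only [Finset.range_zero, Finset.sum_empty, zero_div, sub_zero]
      rw [max_eq_left]
      have : 1 ≤ 1/sm := one_le_one_div hsm0 hsm1
      linarith
    | succ n ih =>
      have hstep : ∑ k ∈ Finset.range (n+1), p k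
          = (∑ k ∈ Finset.range n, p k) + p n := Finset.sum_range_succ p n
      rw [Finset.sum_range_succ, ih, hPp n]
      split_ifs with h1 h2
      · have hx1 : (∑ k ∈ Finset.range (n+1), p k) ≤ cp := h1.le
        have hx0 : (∑ k ∈ Finset.range n, p k) ≤ cp := by
          have := hp n; linarith [hstep ▸ hx1]
        rw [max_eq_left (key1 _ hx0), max_eq_left (key1 _ hx1), hstep]
        ring
      · have hx0 : cp ≤ ∑ k ∈ Finset.range n, p k := h2.le
        have hx1 : cp ≤ ∑ k ∈ Finset.range (n+1), p k := le_of_not_gt h1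
        rw [max_eq_right (key2 _ hx0), max_eq_right (key2 _ hx1), hstep]
        field_simp
        ring
      · have hx0 : (∑ k ∈ Finset.range n, p k) ≤ cp := le_of_not_gt h2
        have hx1 : cp ≤ ∑ k ∈ Finset.range (n+1), p k := le_of_not_gt h1
        rw [max_eq_left (key1 _ hx0), max_eq_right (key2 _ hx1), hcp]
        field_simp
        ring
  have bound1 : ∀ n, (∑ k ∈ Finset.range n, p k)/sp ≤ ∑ k ∈ Finset.range n, q k := by
    intro n
    rw [Finset.sum_div]
    exact Finset.sum_le_sum fun k _ => (hqb k).1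
  have bound2 : ∀ n, 1 - (1 - ∑ k ∈ Finset.range n, p k)/sm
      ≤ ∑ k ∈ Finset.range n, q k := by
    intro n
    have hq' : (∑ k ∈ Finset.range n, q k) + ∑' k, q (k + n) = 1 :=
      (Summable.sum_add_tsum_nat_add n hqs).trans hq1
    have hp' : (∑ k ∈ Finset.range n, p k) + ∑' k, p (k + n) = 1 :=
      (Summable.sum_add_tsum_nat_add n hps).trans hp1
    have htail : ∑' k, q (k + n) ≤ ∑' k, p (k + n) / sm :=
      Summable.tsum_le_tsum (fun k => (hqb _).2)
        ((summable_nat_add_iff n).mpr hqs)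
        ((summable_nat_add_iff n).mpr (hps.div_const sm))
    have heq : ∑' k, p (k + n) / sm = (1 - ∑ k ∈ Finset.range n, p k)/sm := by
      rw [tsum_div_const]
      congr 1
      linarith
    linarith [heq ▸ htail]
  intro n
  calc ∑ k ∈ Finset.range (n+1), Pp k
      = max ((∑ k ∈ Finset.range (n+1), p k) / sp)
          (1 - (1 - ∑ k ∈ Finset.range (n+1), p k)/sm) := main (n+1)
    _ ≤ ∑ k ∈ Finset.range (n+1), q k := max_le (bound1 (n+1)) (bound2 (n+1))
end

section
/- Let P be an atomless probability measure on ℝ with CDF F(y) := P((−∞, y]) and with ∫ |y| dP(y) < ∞, and let s⁻, s⁺ be GMSM constants with threshold c⁺. Then for every measurable g : ℝ → ℝ with 1/s⁺ ≤ g ≤ 1/s⁻ everywhere and ∫ g dP = 1, one has ∫ y·g(y) dP(y) ≤ (1/s⁺)·∫_{{y : F(y) ≤ c⁺}} y dP(y) + (1/s⁻)·∫_{{y : F(y) > c⁺}} y dP(y). Moreover, this bound is attained by the feasible choice g₊(y) := 1/s⁺ if F(y) ≤ c⁺ and g₊(y) := 1/s⁻ otherwise, which satisfies ∫ g₊ dP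 = 1. -/
open MeasureTheory

private lemma gmsm_measure_aux (P : Measure ℝ) [IsProbabilityMeasure P] [NullSingletonClass P]
    (cp : ℝ) (hcp0 : 0 ≤ cp) (hcp1 : cp ≤ 1)
    (F : ℝ → ℝ) (hF : ∀ y, P (Set.Iic y) = ENNReal.ofReal (F y)) (hmono : Monotone F) :
    P {y | F y ≤ cp} = ENNReal.ofReal cp := by
  by_cases hne : ∃ y, F y ≤ cp
  · by_cases hub : ∃ b, cp < F b
    · obtain ⟨y0, hy0⟩ := hne
      obtain ⟨b, hb⟩ := hub
      have hAb : ∀ z ∈ {y | F y ≤ cp}, z ≤ b := by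
        intro z hz
        by_contra h
        push_neg at h
        exact absurd ((hmono h.le).trans hz) (not_le.2 hb)
      have hbdd : BddAbove {y | F y ≤ cp} := ⟨b, hAb⟩
      have hAne : Set.Nonempty {y | F y ≤ cp} := ⟨y0, hy0⟩
      set a := sSup {y | F y ≤ cp} with ha
      have hIio : Set.Iio a ⊆ {y | F y ≤ cp} := by
        intro y hy
        obtain ⟨z, hz, hyz⟩ := exists_lt_of_lt_csSup hAne hy
        exact le_trans (hmono hyz.le) hz
      have hIic : {y | F y ≤ cp} ⊆ Set.Iic a := fun z hz => le_csSup hbdd hz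
      have hio : P (Set.Iio a) = P (Set.Iic a) := measure_congr Iio_ae_eq_Iic
      have hPA : P {y | F y ≤ cp} = P (Set.Iic a) := by
        refine le_antisymm (measure_mono hIic) ?_
        rw [← hio]; exact measure_mono hIio
      rw [hPA]
      refine le_antisymm ?_ ?_
      · rw [← hio]
        have hU : (⋃ n : ℕ, Set.Iic (a - 1 / ((n : ℝ) + 1))) = Set.Iio a := by
          ext y
          simp only [Set.mem_iUnion, Set.mem_Iic, Set.mem_Iio]
          constructor
          · rintro ⟨n, hn⟩
            have h1 : (0:ℝ) < 1 / ((n:ℝ) + 1) := by positivity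
            linarith
          · intro hy
            obtain ⟨n, hn⟩ := exists_nat_one_div_lt (sub_pos.2 hy)
            exact ⟨n, by linarith⟩
        have hmonoS : Monotone fun n : ℕ => Set.Iic (a - 1 / ((n:ℝ) + 1)) := by
          intro n m hnm
          apply Set.Iic_subset_Iic.2
          have h1 : (0:ℝ) < (n:ℝ) + 1 := by positivity
          have h2 : ((n:ℝ) + 1) ≤ ((m:ℝ) + 1) := by
            have := (Nat.cast_le (α := ℝ)).2 hnm
            linarith
          have := one_div_le_one_div_of_le h1 h2
          linarith
        rw [← hU, hmonoS.measure_iUnion]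
        refine iSup_le fun n => ?_
        rw [hF]
        refine ENNReal.ofReal_le_ofReal ?_
        refine hIio ?_
        have h1 : (0:ℝ) < 1 / ((n:ℝ) + 1) := by positivity
        simp only [Set.mem_Iio]
        linarith
      · have hmem : ∀ y, a < y → cp < F y := by
          intro y hy
          by_contra h
          push_neg at h
          exact absurd (le_csSup hbdd h) (not_le.2 hy)
        have hI : (⋂ n : ℕ, Set.Iic (a + 1 / ((n:ℝ) + 1))) = Set.Iic a := by
          ext y
          simp only [Set.mem_iInter, Set.mem_Iic]
          constructor
          · intro h
            by_contra hya
            push_neg at hya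
            obtain ⟨n, hn⟩ := exists_nat_one_div_lt (sub_pos.2 hya)
            have := h n
            linarith
          · intro h n
            have h1 : (0:ℝ) < 1 / ((n:ℝ) + 1) := by positivity
            linarith
        have hanti : Antitone fun n : ℕ => Set.Iic (a + 1 / ((n:ℝ) + 1)) := by
          intro n m hnm
          apply Set.Iic_subset_Iic.2
          have h1 : (0:ℝ) < (n:ℝ) + 1 := by positivity
          have h2 : ((n:ℝ) + 1) ≤ ((m:ℝ) + 1) := by
            have := (Nat.cast_le (α := ℝ)).2 hnm
            linarith
          have := one_div_le_one_div_of_le h1 h2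
          linarith
        rw [← hI, hanti.measure_iInter (fun n => measurableSet_Iic.nullMeasurableSet)
          ⟨0, measure_ne_top P _⟩]
        refine le_iInf fun n => ?_
        rw [hF]
        refine ENNReal.ofReal_le_ofReal (le_of_lt (hmem _ ?_))
        have h1 : (0:ℝ) < 1 / ((n:ℝ) + 1) := by positivity
        linarith
    · push_neg at hub
      have hA : {y | F y ≤ cp} = Set.univ := Set.eq_univ_of_forall hub
      rw [hA, measure_univ]
      refine le_antisymm ?_ (by simpa using ENNReal.ofReal_le_one.2 hcp1)
      have hU : (⋃ n : ℕ, Set.Iic ((n:ℝ))) = Set.univ := by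
        ext y
        simp only [Set.mem_iUnion, Set.mem_Iic, Set.mem_univ, iff_true]
        obtain ⟨n, hn⟩ := exists_nat_ge y
        exact ⟨n, hn⟩
      have hmonoS : Monotone fun n : ℕ => Set.Iic ((n:ℝ)) := fun n m h =>
        Set.Iic_subset_Iic.2 (by exact_mod_cast h)
      calc (1 : ENNReal) = P Set.univ := measure_univ.symm
        _ = ⨆ n : ℕ, P (Set.Iic ((n:ℝ))) := by rw [← hU, hmonoS.measure_iUnion]
        _ ≤ ENNReal.ofReal cp := iSup_le fun n => by
            rw [hF]; exact ENNReal.ofReal_le_ofReal (hub _)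
  · push_neg at hne
    have hA : {y | F y ≤ cp} = ∅ := by
      ext y
      simp only [Set.mem_setOf_eq, Set.mem_empty_iff_false, iff_false, not_le]
      exact hne y
    rw [hA, measure_empty]
    have hI : (⋂ n : ℕ, Set.Iic (-(n:ℝ))) = ∅ := by
      ext y
      simp only [Set.mem_iInter, Set.mem_Iic, Set.mem_empty_iff_false, iff_false]
      push_neg
      obtain ⟨n, hn⟩ := exists_nat_gt (-y)
      exact ⟨n, by linarith⟩
    have hanti : Antitone fun n : ℕ => Set.Iic (-(n:ℝ)) := fun n m hnm =>
      Set.Iic_subset_Iic.2 (by simpa using (Nat.cast_le (α := ℝ)).2 hnm)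
    have h0 := hanti.measure_iInter (fun n => measurableSet_Iic.nullMeasurableSet)
      ⟨0, measure_ne_top P _⟩
    rw [hI, measure_empty] at h0
    have hle : ENNReal.ofReal cp ≤ 0 := by
      rw [h0]
      refine le_iInf fun n => ?_
      rw [hF]
      exact ENNReal.ofReal_le_ofReal (le_of_lt (hne _))
    exact (le_antisymm hle zero_le).symm

private lemma gmsm_integrable_aux (P : Measure ℝ) [IsProbabilityMeasure P]
    (hint : Integrable (fun y : ℝ => y) P) {g : ℝ → ℝ} (hg : Measurable g) {c : ℝ}
    (h0 : ∀ y, 0 ≤ g y) (h1 : ∀ y, g y ≤ c) :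
    Integrable g P ∧ Integrable (fun y => y * g y) P := by
  constructor
  · refine Integrable.mono' (integrable_const c) hg.aestronglyMeasurable
      (ae_of_all _ fun y => ?_)
    rw [Real.norm_eq_abs, abs_of_nonneg (h0 y)]
    exact h1 y
  · refine Integrable.mono' (hint.abs.mul_const c)
      (measurable_id.mul hg).aestronglyMeasurable (ae_of_all _ fun y => ?_)
    rw [Real.norm_eq_abs, abs_mul]
    have hgy : |g y| ≤ c := by rw [abs_of_nonneg (h0 y)]; exact h1 y
    exact mul_le_mul_of_nonneg_left hgy (abs_nonneg y)

/-- Corollary 1 of the paper for the expectation functional (upper bound): the sharp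
upper bound on the mean of any distribution whose density with respect to the
observational distribution `P` is constrained by the GMSM, attained by the threshold
reweighting `g₊`. -/
theorem gmsm_expectation_upper_bound
    (P : Measure ℝ) [IsProbabilityMeasure P] [NullSingletonClass P]
    (hint : Integrable (fun y : ℝ => y) P)
    (sm sp : ℝ) (hsm0 : 0 < sm) (hsm1 : sm ≤ 1) (hsp1 : 1 ≤ sp) (hlt : sm < sp)
    (cp : ℝ) (hcp : cp = (1 - sm) * sp / (sp - sm))
    (F : ℝ → ℝ) (hF : ∀ y, F y = (P (Set.Iic y)).toReal)
    (gp : ℝ → ℝ) (hgp : ∀ y, gp y = if F y ≤ cp then 1 / sp else 1 / sm)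
    (B : ℝ)
    (hB : B = (1 / sp) * (∫ y in {y | F y ≤ cp}, y ∂P) +
      (1 / sm) * (∫ y in {y | cp < F y}, y ∂P)) :
    (∀ g : ℝ → ℝ, Measurable g → (∀ y, 1 / sp ≤ g y ∧ g y ≤ 1 / sm) →
      (∫ y, g y ∂P = 1) → ∫ y, y * g y ∂P ≤ B) ∧
    (∀ y, 1 / sp ≤ gp y ∧ gp y ≤ 1 / sm) ∧
    (∫ y, gp y ∂P = 1) ∧
    (∫ y, y * gp y ∂P = B) := by
  have hsp0 : (0:ℝ) < sp := by linarith
  have hsmne : sm ≠ 0 := ne_of_gt hsm0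
  have hspne : sp ≠ 0 := ne_of_gt hsp0
  have hdne : sp - sm ≠ 0 := ne_of_gt (by linarith)
  have hcp0 : 0 ≤ cp := by
    rw [hcp]
    exact div_nonneg (mul_nonneg (by linarith) (by linarith)) (by linarith)
  have hcp1 : cp ≤ 1 := by
    rw [hcp, div_le_one (by linarith)]
    nlinarith
  have hFmono : Monotone F := by
    intro x y hxy
    rw [hF, hF]
    exact ENNReal.toReal_mono (measure_ne_top P _)
      (measure_mono (Set.Iic_subset_Iic.2 hxy))
  have hF0 : ∀ y, P (Set.Iic y) = ENNReal.ofReal (F y) := fun y => by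
    rw [hF]; exact (ENNReal.ofReal_toReal (measure_ne_top P _)).symm
  have hFmeas : Measurable F := hFmono.measurable
  have hAmeas : MeasurableSet {y | F y ≤ cp} := measurableSet_le hFmeas measurable_const
  have hPA : P {y | F y ≤ cp} = ENNReal.ofReal cp :=
    gmsm_measure_aux P cp hcp0 hcp1 F hF0 hFmono
  have hAc : {y : ℝ | cp < F y} = {y | F y ≤ cp}ᶜ := by
    ext y; simp [not_le]
  have hinv : 1 / sp ≤ 1 / sm := one_div_le_one_div_of_le hsm0 hlt.le
  have hinvsp : (0:ℝ) < 1 / sp := by positivity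
  have hgpb : ∀ y, 1 / sp ≤ gp y ∧ gp y ≤ 1 / sm := by
    intro y
    rw [hgp]
    split
    · exact ⟨le_refl _, hinv⟩
    · exact ⟨hinv, le_refl _⟩
  have hgpm : Measurable gp := by
    have h : gp = fun y => if F y ≤ cp then 1 / sp else 1 / sm := funext hgp
    rw [h]
    exact Measurable.ite hAmeas measurable_const measurable_const
  obtain ⟨hgpint, hygpint⟩ := gmsm_integrable_aux P hint hgpm
    (fun y => le_trans hinvsp.le (hgpb y).1) (fun y => (hgpb y).2)
  have hPAr : (P {y | F y ≤ cp}).toReal = cp := by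
    rw [hPA, ENNReal.toReal_ofReal hcp0]
  have hPAcr : (P {y | F y ≤ cp}ᶜ).toReal = 1 - cp := by
    have h := integral_add_compl hAmeas (integrable_const (1:ℝ) (μ := P))
    simp only [setIntegral_const, smul_eq_mul, mul_one, integral_const, measure_univ,
      Measure.restrict_apply_univ, ENNReal.toReal_one, one_mul] at h
    simp only [Measure.real, Measure.restrict_apply_univ, measure_univ, ENNReal.toReal_one] at h
    rw [hPAr] at h
    linarith
  -- the value of ∫ gp
  have h3 : ∫ y, gp y ∂P = 1 := by
    rw [← integral_add_compl hAmeas hgpint]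
    have e1 : ∫ y in {y | F y ≤ cp}, gp y ∂P = cp * (1 / sp) := by
      rw [setIntegral_congr_fun (g := fun _ => 1 / sp) hAmeas
        (fun y hy => by rw [hgp]; exact if_pos hy),
        setIntegral_const, Measure.real, hPAr, smul_eq_mul]
    have e2 : ∫ y in {y | F y ≤ cp}ᶜ, gp y ∂P = (1 - cp) * (1 / sm) := by
      rw [setIntegral_congr_fun (g := fun _ => 1 / sm) hAmeas.compl
        (fun y hy => by rw [hgp]; exact if_neg (by simpa using hy)),
        setIntegral_const, Measure.real, hPAcr, smul_eq_mul]
    rw [e1, e2, hcp]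
    field_simp
    ring
  -- the value of ∫ y * gp y
  have h4 : ∫ y, y * gp y ∂P = B := by
    rw [← integral_add_compl hAmeas hygpint]
    have e1 : ∫ y in {y | F y ≤ cp}, y * gp y ∂P = (∫ y in {y | F y ≤ cp}, y ∂P) * (1 / sp) := by
      rw [setIntegral_congr_fun (g := fun y => y * (1 / sp)) hAmeas
        (fun y hy => by show y * gp y = y * (1 / sp); rw [hgp, if_pos (show F y ≤ cp from hy)]),
        integral_mul_const]
    have e2 : ∫ y in {y | F y ≤ cp}ᶜ, y * gp y ∂P
        = (∫ y in {y | F y ≤ cp}ᶜ, y ∂P) * (1 / sm) := by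
      rw [setIntegral_congr_fun (g := fun y => y * (1 / sm)) hAmeas.compl
        (fun y hy => by show y * gp y = y * (1 / sm); rw [hgp, if_neg (show ¬ F y ≤ cp from by simpa using hy)]),
        integral_mul_const]
    rw [e1, e2, hB, hAc]
    ring
  refine ⟨?_, hgpb, h3, h4⟩
  intro g hgm hgb hgint1
  obtain ⟨hgint, hygint⟩ := gmsm_integrable_aux P hint hgm
    (fun y => le_trans hinvsp.le (hgb y).1) (fun y => (hgb y).2)
  rw [← h4]
  by_cases hne : ∃ y, F y ≤ cp
  · by_cases hub : ∃ b, cp < F b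
    · obtain ⟨y0, hy0⟩ := hne
      obtain ⟨b, hb⟩ := hub
      have hAb : ∀ z ∈ {y | F y ≤ cp}, z ≤ b := by
        intro z hz
        by_contra h
        push_neg at h
        exact absurd ((hFmono h.le).trans hz) (not_le.2 hb)
      have hbdd : BddAbove {y | F y ≤ cp} := ⟨b, hAb⟩
      have hAne : Set.Nonempty {y | F y ≤ cp} := ⟨y0, hy0⟩
      set a := sSup {y | F y ≤ cp} with ha
      have hpt : ∀ y, (y - a) * (g y - gp y) ≤ 0 := by
        intro y
        by_cases hy : F y ≤ cp
        · have h1 : y ≤ a := le_csSup hbdd hy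
          have h2 : gp y ≤ g y := by rw [hgp, if_pos hy]; exact (hgb y).1
          exact mul_nonpos_of_nonpos_of_nonneg (by linarith) (by linarith)
        · have h1 : a ≤ y := by
            refine csSup_le hAne fun z hz => ?_
            by_contra h
            push_neg at h
            exact hy (le_trans (hFmono h.le) hz)
          have h2 : g y ≤ gp y := by rw [hgp, if_neg hy]; exact (hgb y).2
          exact mul_nonpos_of_nonneg_of_nonpos (by linarith) (by linarith)
      have hfeq : (fun y => (y - a) * (g y - gp y))
          = fun y => (y * g y - y * gp y) - a * (g y - gp y) := by
        funext y; ring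
      have hle : ∫ y, (y - a) * (g y - gp y) ∂P ≤ 0 := integral_nonpos fun y => hpt y
      have hzero : ∫ y, (g y - gp y) ∂P = 0 := by
        rw [integral_sub hgint hgpint, hgint1, h3]
        ring
      have hcomp : ∫ y, (y - a) * (g y - gp y) ∂P
          = ∫ y, y * g y ∂P - ∫ y, y * gp y ∂P := by
        calc ∫ y, (y - a) * (g y - gp y) ∂P
            = ∫ y, ((y * g y - y * gp y) - a * (g y - gp y)) ∂P := by rw [hfeq]
          _ = (∫ y, (y * g y - y * gp y) ∂P) - ∫ y, a * (g y - gp y) ∂P :=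
              integral_sub (hygint.sub hygpint) ((hgint.sub hgpint).const_mul a)
          _ = (∫ y, y * g y ∂P - ∫ y, y * gp y ∂P) - a * ∫ y, (g y - gp y) ∂P := by
              rw [integral_sub hygint hygpint, integral_const_mul]
          _ = ∫ y, y * g y ∂P - ∫ y, y * gp y ∂P := by rw [hzero]; ring
      rw [hcomp] at hle
      linarith
    · push_neg at hub
      have hgpeq : ∀ y, gp y = 1 / sp := fun y => by rw [hgp, if_pos (hub y)]
      have h0 : ∫ y, (g y - gp y) ∂P = 0 := by
        rw [integral_sub hgint hgpint, hgint1, h3]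
        ring
      have hz := (integral_eq_zero_iff_of_nonneg
        (fun y => sub_nonneg.2 ((hgpeq y) ▸ (hgb y).1)) (hgint.sub hgpint)).1 h0
      have heq : (fun y => y * g y) =ᵐ[P] fun y => y * gp y := by
        filter_upwards [hz] with y hy
        have hgy : g y = gp y := by
          have : g y - gp y = 0 := hy
          linarith
        rw [hgy]
      exact le_of_eq (integral_congr_ae heq)
  · push_neg at hne
    have hgpeq : ∀ y, gp y = 1 / sm := fun y => by
      rw [hgp, if_neg (not_le.2 (hne y))]
    have h0 : ∫ y, (gp y - g y) ∂P = 0 := by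
      rw [integral_sub hgpint hgint, hgint1, h3]
      ring
    have hz := (integral_eq_zero_iff_of_nonneg
      (fun y => sub_nonneg.2 ((hgpeq y) ▸ (hgb y).2)) (hgpint.sub hgint)).1 h0
    have heq : (fun y => y * g y) =ᵐ[P] fun y => y * gp y := by
      filter_upwards [hz] with y hy
      have hgy : g y = gp y := by
        have : gp y - g y = 0 := hy
        linarith
      rw [hgy]
    exact le_of_eq (integral_congr_ae heq)
end

section
/- Let P be an atomless probability measure on ℝ with CDF F(y) := P((−∞, y]) and with ∫ |y| dP(y) < ∞, and let s⁻, s⁺ be GMSM constants with threshold c⁻. Then for every measurable g : ℝ → ℝ with 1/s⁺ ≤ g ≤ 1/s⁻ everywhere and ∫ g dP = 1, one has ∫ y·g(y) dP(y) ≥ (1/s⁻)·∫_{{y : F(y) ≤ c⁻}} y dP(y) + (1/s⁺)·∫_{{y : F(y) > c⁻}} y dP(y). Moreover, this bound is attained by the feasible choice g₋(y) := 1/s⁻ if F(y) ≤ c⁻ and g₋(y) := 1/s⁺ otherwise, which satisfies ∫ g₋ dP = 1. -/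
open MeasureTheory Set Filter Topology
open scoped ENNReal

lemma cdf_levelset (P : Measure ℝ) [IsProbabilityMeasure P] [NullSingletonClass P]
    (F : ℝ → ℝ) (hF : ∀ y, F y = (P (Set.Iic y)).toReal)
    (c : ℝ) (hc0 : 0 ≤ c) (hc1 : c < 1) :
    (P {y | F y ≤ c}).toReal = c ∧
      ({y | F y ≤ c} = ∅ ∨ ∃ q, {y | F y ≤ c} = Set.Iic q) := by
  have hfin : ∀ y, P (Set.Iic y) ≠ ⊤ := fun y => measure_ne_top _ _
  have hFe : ∀ y, P (Set.Iic y) = ENNReal.ofReal (F y) := fun y => by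
    rw [hF]; exact (ENNReal.ofReal_toReal (hfin y)).symm
  have Fmono : Monotone F := by
    intro a b hab
    rw [hF, hF]
    exact ENNReal.toReal_mono (hfin b) (measure_mono (Set.Iic_subset_Iic.2 hab))
  set A := {y | F y ≤ c} with hA
  -- existence of M with c < F M
  have htop : Tendsto (fun y : ℝ => P (Set.Iic y)) atTop (𝓝 1) := by
    simpa using tendsto_measure_Iic_atTop (α := ℝ) P
  have htopF : Tendsto F atTop (𝓝 1) := by
    have h2 := (ENNReal.tendsto_toReal (by norm_num)).comp htop
    have : F = (ENNReal.toReal ∘ fun y => P (Set.Iic y)) := funext fun y => hF y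
    rwa [this]
  obtain ⟨M, hM⟩ : ∃ M, c < F M := by
    have := htopF.eventually (eventually_gt_nhds hc1)
    exact this.exists
  by_cases hAe : A = ∅
  · -- then c = 0
    have hall : ∀ y, c < F y := by
      intro y
      by_contra h
      exact (Set.eq_empty_iff_forall_notMem.1 hAe y) (not_lt.1 h)
    have hbot : Tendsto (fun n : ℕ => P (Set.Iic (-(n:ℝ)))) atTop (𝓝 (P (⋂ n : ℕ, Set.Iic (-(n:ℝ))))) := by
      apply tendsto_measure_iInter_atTop
      · exact fun n => (measurableSet_Iic).nullMeasurableSet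
      · intro a b hab
        exact Set.Iic_subset_Iic.2 (by simp; exact_mod_cast hab)
      · exact ⟨0, measure_ne_top _ _⟩
    have hempty : (⋂ n : ℕ, Set.Iic (-(n:ℝ))) = ∅ := by
      ext x
      simp only [Set.mem_iInter, Set.mem_Iic, Set.mem_empty_iff_false, iff_false, not_forall]
      obtain ⟨n, hn⟩ := exists_nat_gt (-x)
      exact ⟨n, by linarith⟩
    rw [hempty, measure_empty] at hbot
    have hle : ENNReal.ofReal c ≤ 0 := by
      apply ge_of_tendsto hbot
      filter_upwards with n
      rw [hFe]
      exact ENNReal.ofReal_le_ofReal (hall _).le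
    have : c ≤ 0 := by simpa using hle
    have hc : c = 0 := le_antisymm this hc0
    constructor
    · rw [hAe]; simp [hc]
    · exact Or.inl hAe
  · obtain ⟨a, ha⟩ := Set.nonempty_iff_ne_empty.2 hAe
    have hbdd : BddAbove A := by
      refine ⟨M, fun y hy => ?_⟩
      by_contra h
      push_neg at h
      exact absurd (Fmono h.le) (not_le.2 (lt_of_le_of_lt hy hM))
    set q := sSup A with hq
    have hAle : ∀ y ∈ A, y ≤ q := fun y hy => le_csSup hbdd hy
    -- F q ≤ c
    have hqA : F q ≤ c := by
      have hsub : Set.Iio q = ⋃ n : ℕ, Set.Iic (q - 1/(n+1)) := by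
        ext x
        simp only [Set.mem_Iio, Set.mem_iUnion, Set.mem_Iic]
        constructor
        · intro hx
          obtain ⟨n, hn⟩ := exists_nat_one_div_lt (sub_pos.2 hx)
          exact ⟨n, by push_cast at hn ⊢; linarith⟩
        · rintro ⟨n, hn⟩
          have : (0:ℝ) < 1/(n+1) := by positivity
          linarith
      have hmono : Monotone (fun n : ℕ => Set.Iic (q - 1/((n:ℝ)+1))) := by
        intro a b hab
        apply Set.Iic_subset_Iic.2
        have : (1:ℝ)/((b:ℝ)+1) ≤ 1/((a:ℝ)+1) := by
          apply one_div_le_one_div_of_le (by positivity)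
          exact_mod_cast by simpa using Nat.succ_le_succ hab
        linarith
      have htend : Tendsto (fun n : ℕ => P (Set.Iic (q - 1/(n+1)))) atTop (𝓝 (P (Set.Iio q))) := by
        rw [hsub]
        exact tendsto_measure_iUnion_atTop hmono
      have hle : P (Set.Iio q) ≤ ENNReal.ofReal c := by
        apply le_of_tendsto htend
        filter_upwards with n
        have hlt : q - 1/((n:ℝ)+1) < q := by
          have : (0:ℝ) < 1/((n:ℝ)+1) := by positivity
          linarith
        obtain ⟨b, hbA, hbgt⟩ := exists_lt_of_lt_csSup ⟨a, ha⟩ hlt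
        rw [hFe]
        exact ENNReal.ofReal_le_ofReal (le_trans (Fmono hbgt.le) hbA)
      have hIic : P (Set.Iic q) = P (Set.Iio q) := (measure_congr Iio_ae_eq_Iic).symm
      rw [hF]
      calc (P (Set.Iic q)).toReal ≤ (ENNReal.ofReal c).toReal :=
            ENNReal.toReal_mono (by simp) (by rw [hIic]; exact hle)
        _ = c := ENNReal.toReal_ofReal hc0
    have hAeq : A = Set.Iic q := by
      apply Set.Subset.antisymm
      · exact fun y hy => hAle y hy
      · exact fun y hy => le_trans (Fmono hy) hqA
    -- F q ≥ c
    have hqge : c ≤ F q := by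
      have hanti : Antitone (fun n : ℕ => Set.Iic (q + 1/((n:ℝ)+1))) := by
        intro a b hab
        apply Set.Iic_subset_Iic.2
        have : (1:ℝ)/((b:ℝ)+1) ≤ 1/((a:ℝ)+1) := by
          apply one_div_le_one_div_of_le (by positivity)
          exact_mod_cast by simpa using Nat.succ_le_succ hab
        linarith
      have hint : (⋂ n : ℕ, Set.Iic (q + 1/((n:ℝ)+1))) = Set.Iic q := by
        ext x
        simp only [Set.mem_iInter, Set.mem_Iic]
        constructor
        · intro h
          by_contra hx
          push_neg at hx
          obtain ⟨n, hn⟩ := exists_nat_one_div_lt (sub_pos.2 hx)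
          have := h n
          push_cast at hn
          linarith
        · intro h n
          have : (0:ℝ) < 1/((n:ℝ)+1) := by positivity
          linarith
      have htend : Tendsto (fun n : ℕ => P (Set.Iic (q + 1/(n+1)))) atTop (𝓝 (P (Set.Iic q))) := by
        have := tendsto_measure_iInter_atTop (μ := P)
          (s := fun n : ℕ => Set.Iic (q + 1/((n:ℝ)+1)))
          (fun n => measurableSet_Iic.nullMeasurableSet) hanti ⟨0, measure_ne_top _ _⟩
        rwa [hint] at this
      have hge : ENNReal.ofReal c ≤ P (Set.Iic q) := by
        apply ge_of_tendsto htend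
        filter_upwards with n
        have hgt : q < q + 1/((n:ℝ)+1) := by
          have : (0:ℝ) < 1/((n:ℝ)+1) := by positivity
          linarith
        have hnot : q + 1/((n:ℝ)+1) ∉ A := by
          rw [hAeq]; simpa using hgt
        have : c < F (q + 1/((n:ℝ)+1)) := not_le.1 hnot
        rw [hFe]
        exact ENNReal.ofReal_le_ofReal this.le
      rw [hF]
      calc c = (ENNReal.ofReal c).toReal := (ENNReal.toReal_ofReal hc0).symm
        _ ≤ (P (Set.Iic q)).toReal := ENNReal.toReal_mono (hfin q) hge
    constructor
    · rw [hAeq, ← hF]; exact le_antisymm hqA hqge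
    · exact Or.inr ⟨q, hAeq⟩

/-- Corollary 1 of the paper for the expectation functional (lower bound): the sharp
lower bound on the mean of any distribution whose density with respect to the
observational distribution `P` is constrained by the GMSM, attained by the threshold
reweighting `g₋`. -/
theorem gmsm_expectation_lower_bound
    (P : Measure ℝ) [IsProbabilityMeasure P] [NullSingletonClass P]
    (hint : Integrable (fun y : ℝ => y) P)
    (sm sp : ℝ) (hsm0 : 0 < sm) (hsm1 : sm ≤ 1) (hsp1 : 1 ≤ sp) (hlt : sm < sp)
    (cm : ℝ) (hcm : cm = (sp - 1) * sm / (sp - sm))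
    (F : ℝ → ℝ) (hF : ∀ y, F y = (P (Set.Iic y)).toReal)
    (gm : ℝ → ℝ) (hgm : ∀ y, gm y = if F y ≤ cm then 1 / sm else 1 / sp)
    (B : ℝ)
    (hB : B = (1 / sm) * (∫ y in {y | F y ≤ cm}, y ∂P) +
      (1 / sp) * (∫ y in {y | cm < F y}, y ∂P)) :
    (∀ g : ℝ → ℝ, Measurable g → (∀ y, 1 / sp ≤ g y ∧ g y ≤ 1 / sm) →
      (∫ y, g y ∂P = 1) → B ≤ ∫ y, y * g y ∂P) ∧
    (∀ y, 1 / sp ≤ gm y ∧ gm y ≤ 1 / sm) ∧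
    (∫ y, gm y ∂P = 1) ∧
    (∫ y, y * gm y ∂P = B) := by
  have hsp0 : 0 < sp := lt_trans hsm0 hlt
  have hd : 0 < sp - sm := sub_pos.2 hlt
  have hc0 : 0 ≤ cm := by
    rw [hcm]
    have h1 : 0 ≤ sp - 1 := by linarith
    positivity
  have hc1' : cm ≤ 1 := by
    rw [hcm, div_le_one hd]
    nlinarith
  have hinv : 1 / sp ≤ 1 / sm := by
    apply one_div_le_one_div_of_le hsm0 hlt.le
  have hc_id : (1/sm) * cm + (1/sp) * (1 - cm) = 1 := by
    rw [hcm]; field_simp; ring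
  set A := {y | F y ≤ cm} with hA
  have Fmono : Monotone F := by
    intro a b hab
    rw [hF, hF]
    exact ENNReal.toReal_mono (measure_ne_top _ _) (measure_mono (Set.Iic_subset_Iic.2 hab))
  have hAmeas : MeasurableSet A := Fmono.measurable measurableSet_Iic
  have hAc : {y | cm < F y} = Aᶜ := by
    ext y; simp [hA, not_le]
  -- membership bounds for gm
  have hgm_mem : ∀ y, 1 / sp ≤ gm y ∧ gm y ≤ 1 / sm := by
    intro y
    rw [hgm]
    split <;> exact ⟨by first | exact le_refl _ | exact hinv, by first | exact le_refl _ | exact hinv⟩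
  have hgm_meas : Measurable gm := by
    have : gm = fun y => if F y ≤ cm then 1/sm else 1/sp := funext hgm
    rw [this]
    exact Measurable.ite hAmeas measurable_const measurable_const
  -- integrability helpers
  have hnorm : ∀ (h : ℝ → ℝ), (∀ y, 1 / sp ≤ h y ∧ h y ≤ 1 / sm) → ∀ y, ‖h y‖ ≤ 1/sm := by
    intro h hb y
    rw [Real.norm_eq_abs, abs_le]
    refine ⟨?_, (hb y).2⟩
    have := (hb y).1
    have : (0:ℝ) < 1/sp := by positivity
    linarith [(hb y).1]
  have hint_g : ∀ (h : ℝ → ℝ), Measurable h → (∀ y, 1 / sp ≤ h y ∧ h y ≤ 1 / sm) →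
      Integrable h P := by
    intro h hm hb
    exact Integrable.mono' (integrable_const (1/sm)) hm.aestronglyMeasurable
      (ae_of_all _ (hnorm h hb))
  have hint_yg : ∀ (h : ℝ → ℝ), Measurable h → (∀ y, 1 / sp ≤ h y ∧ h y ≤ 1 / sm) →
      Integrable (fun y => y * h y) P := by
    intro h hm hb
    have := hint.bdd_mul hm.aestronglyMeasurable (ae_of_all _ (hnorm h hb))
    simpa [mul_comm] using this
  -- measure of A
  have hPA : (P A).toReal = cm := by
    by_cases hsm1' : sm < 1
    · have hc1 : cm < 1 := by
        rw [hcm, div_lt_one hd]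
        nlinarith
      exact (cdf_levelset P F hF cm hc0 hc1).1
    · have hsme : sm = 1 := le_antisymm hsm1 (not_lt.1 hsm1')
      have hcme : cm = 1 := by
        rw [hcm, hsme, mul_one]
        exact div_self (by linarith)
      have hAu : A = Set.univ := by
        ext y
        simp only [hA, Set.mem_setOf_eq, Set.mem_univ, iff_true, hcme]
        rw [hF]
        have h1 : P (Set.Iic y) ≤ 1 := prob_le_one
        calc (P (Set.Iic y)).toReal ≤ (1 : ℝ≥0∞).toReal :=
              ENNReal.toReal_mono (by simp) h1
          _ = 1 := by simp
      rw [hAu, hcme]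
      simp
  have hPAc : (P Aᶜ).toReal = 1 - cm := by
    rw [measure_compl hAmeas (measure_ne_top _ _)]
    rw [measure_univ]
    rw [ENNReal.toReal_sub_of_le prob_le_one (by simp)]
    rw [hPA]; simp
  -- integral of gm
  have hIgmA : ∫ y in A, gm y ∂P = (1/sm) * (P A).toReal := by
    rw [setIntegral_congr_fun hAmeas (g := fun _ => 1/sm) (fun y hy => by rw [hgm, if_pos (show F y ≤ cm from hy)])]
    rw [setIntegral_const]
    rw [smul_eq_mul, mul_comm]
    rfl
  have hIgmAc : ∫ y in Aᶜ, gm y ∂P = (1/sp) * (P Aᶜ).toReal := by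
    rw [setIntegral_congr_fun hAmeas.compl (g := fun _ => 1/sp)
      (fun y hy => by rw [hgm, if_neg (show ¬ F y ≤ cm from hy)])]
    rw [setIntegral_const]
    rw [smul_eq_mul, mul_comm]
    rfl
  have hIgm : ∫ y, gm y ∂P = 1 := by
    rw [← integral_add_compl hAmeas (hint_g gm hgm_meas hgm_mem)]
    rw [hIgmA, hIgmAc, hPA, hPAc]
    exact hc_id
  -- integral of y * gm
  have hIygm : ∫ y, y * gm y ∂P = B := by
    rw [← integral_add_compl hAmeas (hint_yg gm hgm_meas hgm_mem)]
    have h1 : ∫ y in A, y * gm y ∂P = (1/sm) * ∫ y in A, y ∂P := by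
      rw [setIntegral_congr_fun hAmeas (g := fun y => (1/sm) * y)
        (fun y hy => by rw [hgm, if_pos (show F y ≤ cm from hy)]; ring)]
      exact integral_const_mul _ _
    have h2 : ∫ y in Aᶜ, y * gm y ∂P = (1/sp) * ∫ y in Aᶜ, y ∂P := by
      rw [setIntegral_congr_fun hAmeas.compl (g := fun y => (1/sp) * y)
        (fun y hy => by rw [hgm, if_neg (show ¬ F y ≤ cm from hy)]; ring)]
      exact integral_const_mul _ _
    rw [h1, h2, hB, hAc]
  -- main bound
  refine ⟨?_, hgm_mem, hIgm, hIygm⟩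
  intro g hgmeas hgb hgint
  have hint_g' := hint_g g hgmeas hgb
  have hint_gm' := hint_g gm hgm_meas hgm_mem
  have hint_yg' := hint_yg g hgmeas hgb
  have hint_ygm' := hint_yg gm hgm_meas hgm_mem
  -- helper for a.e.-equality cases
  have hae : (∀ y, gm y ≤ g y) ∨ (∀ y, g y ≤ gm y) → B ≤ ∫ y, y * g y ∂P := by
    intro hcase
    have key : ∫ y, y * g y ∂P = ∫ y, y * gm y ∂P := by
      have heq : g =ᵐ[P] gm := by
        rcases hcase with hle | hle
        · have h0 : ∫ y, (g y - gm y) ∂P = 0 := by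
            rw [integral_sub hint_g' hint_gm', hgint, hIgm]; ring
          have := (integral_eq_zero_iff_of_nonneg
            (fun y => sub_nonneg.2 (hle y)) (hint_g'.sub hint_gm')).1 h0
          filter_upwards [this] with y hy
          have : g y - gm y = 0 := hy
          linarith
        · have h0 : ∫ y, (gm y - g y) ∂P = 0 := by
            rw [integral_sub hint_gm' hint_g', hgint, hIgm]; ring
          have := (integral_eq_zero_iff_of_nonneg
            (fun y => sub_nonneg.2 (hle y)) (hint_gm'.sub hint_g')).1 h0
          filter_upwards [this] with y hy
          have : gm y - g y = 0 := hy
          linarith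
      apply integral_congr_ae
      filter_upwards [heq] with y hy
      rw [hy]
    rw [key, hIygm]
  by_cases hsm1' : sm < 1
  · have hc1 : cm < 1 := by
      rw [hcm, div_lt_one hd]
      nlinarith
    rcases (cdf_levelset P F hF cm hc0 hc1).2 with hAe | ⟨q, hAq⟩
    · -- A empty : gm = 1/sp ≤ g everywhere
      apply hae
      left
      intro y
      have hy : ¬ (F y ≤ cm) := by
        intro h
        exact (Set.eq_empty_iff_forall_notMem.1 hAe y) h
      rw [hgm, if_neg hy]
      exact (hgb y).1
    · -- A = Iic q : threshold argument
      have hpt : ∀ y, q * (g y - gm y) ≤ y * (g y - gm y) := by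
        intro y
        by_cases hy : F y ≤ cm
        · have h1 : y ≤ q := by
            have h : y ∈ Set.Iic q := hAq ▸ hy
            exact h
          have h2 : g y - gm y ≤ 0 := by
            rw [hgm, if_pos hy]
            exact sub_nonpos.2 (hgb y).2
          exact mul_le_mul_of_nonpos_right h1 h2
        · have h1 : q ≤ y := by
            have h : y ∉ Set.Iic q := hAq ▸ hy
            exact le_of_not_ge h
          have h2 : 0 ≤ g y - gm y := by
            rw [hgm, if_neg hy]
            exact sub_nonneg.2 (hgb y).1
          exact mul_le_mul_of_nonneg_right h1 h2
      have hI1 : Integrable (fun y => q * (g y - gm y)) P :=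
        ((hint_g').sub hint_gm').const_mul q
      have hI2 : Integrable (fun y => y * (g y - gm y)) P := by
        have : (fun y => y * (g y - gm y)) = fun y => y * g y - y * gm y := by
          funext y; ring
        rw [this]
        exact hint_yg'.sub hint_ygm'
      have hmono := integral_mono hI1 hI2 hpt
      have hL : ∫ y, q * (g y - gm y) ∂P = 0 := by
        rw [integral_const_mul, integral_sub hint_g' hint_gm', hgint, hIgm]
        ring
      have hR : ∫ y, y * (g y - gm y) ∂P = (∫ y, y * g y ∂P) - ∫ y, y * gm y ∂P := by
        have : (fun y => y * (g y - gm y)) = fun y => y * g y - y * gm y := by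
          funext y; ring
        rw [this]
        exact integral_sub hint_yg' hint_ygm'
      rw [hL, hR, hIygm] at hmono
      linarith
  · -- sm = 1 : cm = 1, gm = 1/sm ≥ g everywhere
    have hsme : sm = 1 := le_antisymm hsm1 (not_lt.1 hsm1')
    apply hae
    right
    intro y
    have hy : F y ≤ cm := by
      have hcme : cm = 1 := by
        rw [hcm, hsme, mul_one]
        exact div_self (by linarith)
      rw [hcme, hF]
      calc (P (Set.Iic y)).toReal ≤ (1 : ℝ≥0∞).toReal :=
            ENNReal.toReal_mono (by simp) prob_le_one
        _ = 1 := by simp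
    rw [hgm, if_pos hy]
    exact (hgb y).2
end

section
/- Let P be an atomless probability measure on ℝ with CDF F(y) := P((−∞, y]), let s⁻, s⁺ be GMSM constants with threshold c⁺, and define F₊(w) := F(w)/s⁺ if F(w) ≤ c⁺ and F₊(w) := c⁺/s⁺ + (F(w) − c⁺)/s⁻ otherwise. Fix α ∈ (0,1). Then for every measurable g : ℝ → ℝ with 1/s⁺ ≤ g ≤ 1/s⁻ everywhere and ∫ g dP = 1, letting ν be the probability measure with density g with respect to P, the α-quantile of ν is at most the generalized α-quantile of F₊; that is, sInf { w : ν((−∞, w]) ≥ α } ≤ sInf { w : F₊(w) ≥ α } (infima taken in the extended real numbers). -/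
open MeasureTheory

/-- Corollary 1 of the paper for the quantile (distributional-effect) functional:
any distribution whose density with respect to the observational distribution `P` is
constrained by the GMSM has `α`-quantile bounded above by the generalized `α`-quantile
of the maximally right-shifted CDF `F₊` (infima taken in the extended reals). -/
theorem gmsm_quantile_upper_bound
    (P : Measure ℝ) [IsProbabilityMeasure P] [NullSingletonClass P]
    (sm sp : ℝ) (hsm0 : 0 < sm) (hsm1 : sm ≤ 1) (hsp1 : 1 ≤ sp) (hlt : sm < sp)
    (cp : ℝ) (hcp : cp = (1 - sm) * sp / (sp - sm))
    (F : ℝ → ℝ) (hF : ∀ w, F w = (P (Set.Iic w)).toReal)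
    (Fp : ℝ → ℝ)
    (hFp : ∀ w, Fp w = if F w ≤ cp then F w / sp else cp / sp + (F w - cp) / sm)
    (α : ℝ) (hα : α ∈ Set.Ioo (0 : ℝ) 1)
    (g : ℝ → ℝ) (hg : Measurable g)
    (hgb : ∀ y, 1 / sp ≤ g y ∧ g y ≤ 1 / sm)
    (hg1 : ∫ y, g y ∂P = 1)
    (ν : Measure ℝ)
    (hν : ν = P.withDensity (fun y => ENNReal.ofReal (g y))) :
    sInf {x : EReal | ∃ w : ℝ, x = (w : EReal) ∧ α ≤ (ν (Set.Iic w)).toReal} ≤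
      sInf {x : EReal | ∃ w : ℝ, x = (w : EReal) ∧ α ≤ Fp w} := by
  have hsp0' : (0:ℝ) < sp := lt_of_le_of_lt hsm0.le hlt
  have hg0 : ∀ y, 0 ≤ g y := fun y => le_trans (by positivity) (hgb y).1
  have hgi : Integrable g P := by
    refine (integrable_const (1/sm)).mono' hg.aestronglyMeasurable (ae_of_all _ fun y => ?_)
    simpa [Real.norm_eq_abs, abs_of_nonneg (hg0 y)] using (hgb y).2
  apply sInf_le_sInf
  rintro x ⟨w, rfl, hw⟩
  refine ⟨w, rfl, ?_⟩
  -- the ν-CDF as a set integral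
  have hνw : (ν (Set.Iic w)).toReal = ∫ y in Set.Iic w, g y ∂P := by
    rw [hν, withDensity_apply _ measurableSet_Iic,
      ← ofReal_integral_eq_lintegral_ofReal hgi.integrableOn (ae_of_all _ hg0),
      ENNReal.toReal_ofReal (integral_nonneg hg0)]
  set I := ∫ y in Set.Iic w, g y ∂P with hI
  set Fw := (P (Set.Iic w)).toReal with hFw
  have hFwval : F w = Fw := hF w
  have hFw1 : Fw ≤ 1 := by
    rw [hFw]
    exact ENNReal.toReal_le_of_le_ofReal one_pos.le (by simpa using prob_le_one)
  -- bound (a): Fw / sp ≤ I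
  have ha : Fw / sp ≤ I := by
    have : ∫ y in Set.Iic w, (1/sp) ∂P ≤ I := by
      refine setIntegral_mono_on ((integrableOn_const_iff).2 (Or.inr ?_)) hgi.integrableOn
        measurableSet_Iic (fun y _ => (hgb y).1)
      exact lt_of_le_of_lt prob_le_one (by norm_num)
    rw [setIntegral_const] at this
    calc Fw / sp = Fw • (1/sp) := by rw [smul_eq_mul]; ring
    _ ≤ I := this
  -- bound (b): 1 - (1 - Fw)/sm ≤ I
  have hb : 1 - (1 - Fw)/sm ≤ I := by
    have hsplit : I + ∫ y in (Set.Iic w)ᶜ, g y ∂P = ∫ y, g y ∂P :=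
      integral_add_compl measurableSet_Iic hgi
    have hcompl : (P (Set.Iic w)ᶜ).toReal = 1 - Fw := by
      rw [measure_compl measurableSet_Iic (measure_ne_top P _), measure_univ,
        ENNReal.toReal_sub_of_le prob_le_one ENNReal.one_ne_top]
      simp [hFw]
    have hJ : ∫ y in (Set.Iic w)ᶜ, g y ∂P ≤ (1 - Fw)/sm := by
      have : ∫ y in (Set.Iic w)ᶜ, g y ∂P ≤ ∫ y in (Set.Iic w)ᶜ, (1/sm) ∂P := by
        refine setIntegral_mono_on hgi.integrableOn ((integrableOn_const_iff).2 (Or.inr ?_))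
          measurableSet_Iic.compl (fun y _ => (hgb y).2)
        exact lt_of_le_of_lt prob_le_one (by norm_num)
      rw [setIntegral_const, measureReal_def, hcompl, smul_eq_mul] at this
      calc ∫ y in (Set.Iic w)ᶜ, g y ∂P ≤ (1 - Fw) * (1/sm) := this
      _ = (1 - Fw)/sm := by ring
    have := hsplit
    rw [hg1] at this
    linarith
  -- combine via the definition of Fp
  have key : Fp w ≤ I := by
    rw [hFp w, hFwval]
    split_ifs with h
    · exact ha
    · have heq : cp / sp + (Fw - cp) / sm = 1 - (1 - Fw)/sm := by
        have h1 : sp - sm ≠ 0 := by linarith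
        have h2 : sm ≠ 0 := ne_of_gt hsm0
        have h3 : sp ≠ 0 := ne_of_gt hsp0'
        rw [hcp]; field_simp; ring
      rw [heq]; exact hb
  calc α ≤ Fp w := hw
  _ ≤ I := key
  _ = (ν (Set.Iic w)).toReal := hνw.symm
end

section
/- Let n ≥ 1, let s⁻, s⁺ be GMSM constants with threshold c⁺, let p : Fin n → ℝ satisfy p(i) ≥ 0 and ∑ᵢ p(i) = 1, and let v : Fin n → ℝ be monotone nondecreasing (i ≤ j implies v(i) ≤ v(j)). Set F(i) := ∑_{j ≤ i} p(j) and F⁻(i) := ∑_{j < i} p(j), and define q₊ : Fin n → ℝ by q₊(i) := p(i)/s⁺ if F(i) < c⁺; q₊(i) := p(i)/s⁻ if F⁻(i) > c⁺; and q₊(i) := (c⁺ − F⁻(i))/s⁺ + (F(i) − c⁺)/s⁻ otherwise. Then: (i) p(i)/s⁺ ≤ q₊(i) ≤ p(i)/s⁻ for all i and ∑ᵢ q₊(i) = 1; and (ii) for every q : Fin n → ℝ with p(i)/s⁺ ≤ q(i) ≤ p(i)/s⁻ for all i and ∑ᵢ q(i) = 1, one has ∑ᵢ v(i)·q(i) ≤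 ∑ᵢ v(i)·q₊(i). -/
private lemma sum_ite_lt (f : ℕ → ℝ) {m n : ℕ} (h : m ≤ n) :
    ∑ k ∈ Finset.range n, (if k < m then f k else 0) = ∑ k ∈ Finset.range m, f k := by
  rw [← Finset.sum_subset (Finset.range_subset_range.2 h)
      (fun x _ hx => if_neg (fun hlt => hx (Finset.mem_range.2 hlt)))]
  exact Finset.sum_congr rfl fun k hk => if_pos (Finset.mem_range.1 hk)

/-- Key optimization step of Algorithm 1 / Corollary 2 of the paper: when maximizing a
weighted sum (with monotone weights `v`) over reweightings of a pmf `p` constrained by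
the GMSM, the optimum is attained by the threshold reweighting `q₊`. -/
theorem gmsm_finite_weighted_sum_optimal
    (n : ℕ) (hn : 1 ≤ n)
    (sm sp : ℝ) (hsm0 : 0 < sm) (hsm1 : sm ≤ 1) (hsp1 : 1 ≤ sp) (hlt : sm < sp)
    (cp : ℝ) (hcp : cp = (1 - sm) * sp / (sp - sm))
    (p : Fin n → ℝ) (hp : ∀ i, 0 ≤ p i) (hp1 : ∑ i, p i = 1)
    (v : Fin n → ℝ) (hv : Monotone v)
    (F Fminus : Fin n → ℝ)
    (hF : ∀ i, F i = ∑ j ∈ Finset.Iic i, p j)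
    (hFminus : ∀ i, Fminus i = ∑ j ∈ Finset.Iio i, p j)
    (qp : Fin n → ℝ)
    (hqp : ∀ i, qp i =
      if F i < cp then p i / sp
      else if cp < Fminus i then p i / sm
      else (cp - Fminus i) / sp + (F i - cp) / sm) :
    ((∀ i, p i / sp ≤ qp i ∧ qp i ≤ p i / sm) ∧ ∑ i, qp i = 1) ∧
    (∀ q : Fin n → ℝ, (∀ i, p i / sp ≤ q i ∧ q i ≤ p i / sm) → ∑ i, q i = 1 →
      ∑ i, v i * q i ≤ ∑ i, v i * qp i) := by
  classical
  have hsp0 : (0:ℝ) < sp := lt_of_lt_of_le one_pos hsp1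
  have hd : (0:ℝ) < sp - sm := by linarith
  have hcp0 : 0 ≤ cp := by
    rw [hcp]
    exact div_nonneg (mul_nonneg (by linarith) (by linarith)) (by linarith)
  have hcp1 : cp ≤ 1 := by
    rw [hcp, div_le_one hd]; nlinarith
  have key : cp / sp + (1 - cp) / sm = 1 := by
    rw [hcp]; field_simp; ring
  have hdivle : ∀ a : ℝ, 0 ≤ a → a / sp ≤ a / sm := by
    intro a ha
    rw [div_le_div_iff₀ hsp0 hsm0]
    nlinarith
  -- ℕ-extensions
  set p' : ℕ → ℝ := fun k => if h : k < n then p ⟨k, h⟩ else 0 with hp'def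
  set S : ℕ → ℝ := fun k => ∑ j ∈ Finset.range k, p' j with hSdef
  set g : ℝ → ℝ := fun x => min x cp / sp + max (x - cp) 0 / sm with hgdef
  have hp'eq : ∀ (k) (h : k < n), p' k = p ⟨k, h⟩ := by
    intro k h; simp only [hp'def]; rw [dif_pos h]
  have hp'0 : ∀ k, 0 ≤ p' k := by
    intro k
    by_cases h : k < n
    · rw [hp'eq k h]; exact hp _
    · simp only [hp'def]; rw [dif_neg h]
  have hSmono : Monotone S := by
    intro a b hab
    exact Finset.sum_le_sum_of_subset_of_nonneg (Finset.range_subset_range.2 hab)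
      (fun k _ _ => hp'0 k)
  have hSsucc : ∀ k, S (k + 1) = S k + p' k := by
    intro k; simp only [hSdef]; rw [Finset.sum_range_succ]
  have hSn : S n = 1 := by
    rw [← hp1]
    simp only [hSdef]
    rw [← Fin.sum_univ_eq_sum_range]
    exact Finset.sum_congr rfl fun i _ => by rw [hp'eq _ i.isLt]
  -- CDF conversions
  have hIic : ∀ i : Fin n, ∑ j ∈ Finset.Iic i, p j = S (i.val + 1) := by
    intro i
    have h1 : ∑ j ∈ Finset.Iic i, p j = ∑ j : Fin n, if j ≤ i then p j else 0 := by
      rw [← Finset.sum_filter]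
      congr 1
      ext j
      simp
    have h2 : (∑ j : Fin n, if j ≤ i then p j else 0)
        = ∑ k ∈ Finset.range n, (if k < i.val + 1 then p' k else 0) := by
      rw [← Fin.sum_univ_eq_sum_range (fun k => if k < i.val + 1 then p' k else 0) n]
      refine Finset.sum_congr rfl fun j _ => ?_
      have hiff : (j ≤ i) ↔ (j.val < i.val + 1) := by
        rw [Nat.lt_succ_iff, Fin.le_def]
      by_cases h : j ≤ i
      · rw [if_pos h, if_pos (hiff.1 h), hp'eq _ j.isLt]
      · rw [if_neg h, if_neg (fun hh => h (hiff.2 hh))]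
    rw [h1, h2, sum_ite_lt p' i.isLt]
  have hIio : ∀ i : Fin n, ∑ j ∈ Finset.Iio i, p j = S i.val := by
    intro i
    have h1 : ∑ j ∈ Finset.Iio i, p j = ∑ j : Fin n, if j < i then p j else 0 := by
      rw [← Finset.sum_filter]
      congr 1
      ext j
      simp
    have h2 : (∑ j : Fin n, if j < i then p j else 0)
        = ∑ k ∈ Finset.range n, (if k < i.val then p' k else 0) := by
      rw [← Fin.sum_univ_eq_sum_range (fun k => if k < i.val then p' k else 0) n]
      refine Finset.sum_congr rfl fun j _ => ?_
      by_cases h : j < i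
      · rw [if_pos h, if_pos (Fin.lt_def.1 h), hp'eq _ j.isLt]
      · rw [if_neg h, if_neg (fun hh => h (Fin.lt_def.2 hh))]
    rw [h1, h2, sum_ite_lt p' (le_of_lt i.isLt)]
  have hFi : ∀ i : Fin n, F i = S (i.val + 1) := fun i => (hF i).trans (hIic i)
  have hFmi : ∀ i : Fin n, Fminus i = S i.val := fun i => (hFminus i).trans (hIio i)
  -- g facts
  have hgle : ∀ x : ℝ, x ≤ cp → g x = x / sp := by
    intro x hx
    simp only [hgdef]
    rw [min_eq_left hx, max_eq_right (sub_nonpos.2 hx), zero_div, add_zero]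
  have hgge : ∀ x : ℝ, cp ≤ x → g x = cp / sp + (x - cp) / sm := by
    intro x hx
    simp only [hgdef]
    rw [min_eq_right hx, max_eq_left (sub_nonneg.2 hx)]
  have hS0 : S 0 = 0 := by simp [hSdef]
  have hg0 : g 0 = 0 := by rw [hgle 0 hcp0, zero_div]
  have hg1 : g 1 = 1 := by
    rw [hgge 1 hcp1]; linarith [key]
  -- part (i): bounds
  have hbounds : ∀ i, p i / sp ≤ qp i ∧ qp i ≤ p i / sm := by
    intro i
    have hdiff : F i = Fminus i + p i := by
      rw [hFi i, hFmi i, hSsucc, hp'eq _ i.isLt]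
    rw [hqp i]
    split_ifs with h1 h2
    · exact ⟨le_rfl, hdivle _ (hp i)⟩
    · exact ⟨hdivle _ (hp i), le_rfl⟩
    · have hge : cp ≤ F i := not_lt.1 h1
      have hle' : Fminus i ≤ cp := not_lt.1 h2
      have e1 : p i = (cp - Fminus i) + (F i - cp) := by rw [hdiff]; ring
      constructor
      · rw [e1, add_div]
        exact add_le_add_right (hdivle _ (sub_nonneg.2 hge)) _
      · rw [e1, add_div]
        exact add_le_add_left (hdivle _ (sub_nonneg.2 hle')) _
  -- extension of qp
  set qp' : ℕ → ℝ := fun k => if h : k < n then qp ⟨k, h⟩ else 0 with hqp'def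
  have hqp'eq : ∀ (k) (h : k < n), qp' k = qp ⟨k, h⟩ := by
    intro k h; simp only [hqp'def]; rw [dif_pos h]
  have htel : ∀ (k) (h : k < n), qp' k = g (S (k + 1)) - g (S k) := by
    intro k hk
    have hmono : S k ≤ S (k + 1) := hSmono (Nat.le_succ k)
    have hpk : p' k = p ⟨k, hk⟩ := hp'eq k hk
    rw [hqp'eq k hk, hqp ⟨k, hk⟩, hFi ⟨k, hk⟩, hFmi ⟨k, hk⟩]
    split_ifs with h1 h2
    · rw [hgle _ (le_of_lt h1), hgle _ (le_trans hmono (le_of_lt h1)),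
        hSsucc, hpk]
      ring
    · rw [hgge _ (le_of_lt h2), hgge _ (le_trans (le_of_lt h2) hmono),
        hSsucc, hpk]
      ring
    · rw [hgge _ (not_lt.1 h1), hgle _ (not_lt.1 h2)]
      ring
  have hqpsum : ∀ k, k ≤ n → ∑ j ∈ Finset.range k, qp' j = g (S k) := by
    intro k hk
    have h1 : ∑ j ∈ Finset.range k, qp' j
        = ∑ j ∈ Finset.range k, (g (S (j + 1)) - g (S j)) :=
      Finset.sum_congr rfl fun j hj =>
        htel j (lt_of_lt_of_le (Finset.mem_range.1 hj) hk)
    rw [h1, Finset.sum_range_sub (fun j => g (S j)), hS0, hg0, sub_zero]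
  have hqpsum1 : ∑ i, qp i = 1 := by
    have h1 : ∑ i : Fin n, qp i = ∑ j ∈ Finset.range n, qp' j := by
      rw [← Fin.sum_univ_eq_sum_range]
      exact Finset.sum_congr rfl fun i _ => (hqp'eq _ i.isLt).symm
    rw [h1, hqpsum n le_rfl, hSn, hg1]
  refine ⟨⟨hbounds, hqpsum1⟩, ?_⟩
  -- part (ii)
  intro q hq hq1
  set q' : ℕ → ℝ := fun k => if h : k < n then q ⟨k, h⟩ else 0 with hq'def
  have hq'eq : ∀ (k) (h : k < n), q' k = q ⟨k, h⟩ := by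
    intro k h; simp only [hq'def]; rw [dif_pos h]
  have hq'n : ∑ j ∈ Finset.range n, q' j = 1 := by
    rw [← Fin.sum_univ_eq_sum_range]
    rw [← hq1]
    exact Finset.sum_congr rfl fun i _ => hq'eq _ i.isLt
  have hq'bd : ∀ (j) (h : j < n), p' j / sp ≤ q' j ∧ q' j ≤ p' j / sm := by
    intro j h
    rw [hq'eq j h, hp'eq j h]
    exact hq _
  -- lower bound on partial sums of q'
  have hlow : ∀ k, k ≤ n → g (S k) ≤ ∑ j ∈ Finset.range k, q' j := by
    intro k hk
    have ha : S k / sp ≤ ∑ j ∈ Finset.range k, q' j := by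
      simp only [hSdef]
      rw [Finset.sum_div]
      exact Finset.sum_le_sum fun j hj =>
        (hq'bd j (lt_of_lt_of_le (Finset.mem_range.1 hj) hk)).1
    have hsplitq : ∑ j ∈ Finset.range k, q' j + ∑ j ∈ Finset.Ico k n, q' j
        = ∑ j ∈ Finset.range n, q' j := by
      rw [Finset.range_eq_Ico, Finset.range_eq_Ico]
      exact Finset.sum_Ico_consecutive _ (Nat.zero_le k) hk
    have hsplitp : S k + ∑ j ∈ Finset.Ico k n, p' j = S n := by
      simp only [hSdef]
      rw [Finset.range_eq_Ico, Finset.range_eq_Ico]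
      exact Finset.sum_Ico_consecutive _ (Nat.zero_le k) hk
    have htail : ∑ j ∈ Finset.Ico k n, q' j ≤ (1 - S k) / sm := by
      have h1 : ∑ j ∈ Finset.Ico k n, q' j ≤ ∑ j ∈ Finset.Ico k n, p' j / sm :=
        Finset.sum_le_sum fun j hj => (hq'bd j (Finset.mem_Ico.1 hj).2).2
      have h2 : ∑ j ∈ Finset.Ico k n, p' j / sm = (1 - S k) / sm := by
        rw [← Finset.sum_div]
        congr 1
        linarith [hsplitp, hSn]
      linarith
    have hb : 1 - (1 - S k) / sm ≤ ∑ j ∈ Finset.range k, q' j := by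
      linarith [hsplitq, hq'n, htail]
    by_cases hx : S k ≤ cp
    · rw [hgle _ hx]; exact ha
    · push_neg at hx
      rw [hgge _ (le_of_lt hx)]
      have he : cp / sp + (S k - cp) / sm = 1 - (1 - S k) / sm := by
        have e : cp / sp = 1 - (1 - cp) / sm := by linarith [key]
        rw [e]
        field_simp
        ring
      rw [he]
      exact hb
  -- Abel summation
  set d : ℕ → ℝ := fun k => q' k - qp' k with hddef
  set v' : ℕ → ℝ := fun k => if h : k < n then v ⟨k, h⟩ else 0 with hv'def
  have hv'eq : ∀ (k) (h : k < n), v' k = v ⟨k, h⟩ := by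
    intro k h; simp only [hv'def]; rw [dif_pos h]
  have hdsum : ∀ k, k ≤ n → 0 ≤ ∑ j ∈ Finset.range k, d j := by
    intro k hk
    have : ∑ j ∈ Finset.range k, d j
        = ∑ j ∈ Finset.range k, q' j - ∑ j ∈ Finset.range k, qp' j := by
      simp only [hddef]
      rw [Finset.sum_sub_distrib]
    rw [this, hqpsum k hk]
    linarith [hlow k hk]
  have hdn : ∑ j ∈ Finset.range n, d j = 0 := by
    have : ∑ j ∈ Finset.range n, d j
        = ∑ j ∈ Finset.range n, q' j - ∑ j ∈ Finset.range n, qp' j := by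
      simp only [hddef]
      rw [Finset.sum_sub_distrib]
    rw [this, hq'n, hqpsum n le_rfl, hSn, hg1]
    ring
  have habel := Finset.sum_range_by_parts v' d n
  have hterm : ∀ i ∈ Finset.range (n - 1),
      0 ≤ (v' (i + 1) - v' i) • ∑ j ∈ Finset.range (i + 1), d j := by
    intro i hi
    have hi' : i < n - 1 := Finset.mem_range.1 hi
    have hin : i < n := by omega
    have hin1 : i + 1 < n := by omega
    have hvmono : v' i ≤ v' (i + 1) := by
      rw [hv'eq i hin, hv'eq (i + 1) hin1]
      exact hv (by exact Fin.mk_le_mk.2 (Nat.le_succ i))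
    rw [smul_eq_mul]
    exact mul_nonneg (by linarith) (hdsum (i + 1) (le_of_lt hin1))
  have hfinal : ∑ i ∈ Finset.range n, v' i * d i ≤ 0 := by
    have h2 : ∑ i ∈ Finset.range n, v' i • d i ≤ 0 := by
      rw [habel, hdn, smul_zero, zero_sub, neg_nonpos]
      exact Finset.sum_nonneg hterm
    simpa using h2
  have hconv : ∑ i ∈ Finset.range n, v' i * d i
      = ∑ i, v i * q i - ∑ i, v i * qp i := by
    rw [← Finset.sum_sub_distrib, ← Fin.sum_univ_eq_sum_range (fun k => v' k * d k) n]
    refine Finset.sum_congr rfl fun i _ => ?_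
    simp only [hddef]
    rw [hv'eq _ i.isLt, hq'eq _ i.isLt, hqp'eq _ i.isLt]
    ring
  linarith [hconv, hfinal]
end

section
/- Let π, ρ ∈ (0,1) be real numbers and Γ ≥ 1. Then the following are equivalent: (i) 1/Γ ≤ (π·(1 − ρ)) / ((1 − π)·ρ) ≤ Γ; (ii) for both pairs (p, r) = (π, ρ) and (p, r) = (1 − π, 1 − ρ), one has 1/((1 − Γ)·p + Γ) ≤ r/p ≤ 1/((1 − Γ⁻¹)·p + Γ⁻¹). -/
/-- Algebraic core of Lemma 1 of the paper (Eq. (13)): Tan's MSM odds-ratio bound with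
sensitivity parameter `Γ` is equivalent to the weighted GMSM density-ratio bound with
weight `q(a,x) = P(a|x)` evaluated at both treatment values `a = 1` and `a = 0`. -/
theorem msm_gmsm_equiv
    (π ρ : ℝ) (hπ : π ∈ Set.Ioo (0 : ℝ) 1) (hρ : ρ ∈ Set.Ioo (0 : ℝ) 1)
    (Γ : ℝ) (hΓ : 1 ≤ Γ) :
    (1 / Γ ≤ π * (1 - ρ) / ((1 - π) * ρ) ∧ π * (1 - ρ) / ((1 - π) * ρ) ≤ Γ) ↔
    ((1 / ((1 - Γ) * π + Γ) ≤ ρ / π ∧ ρ / π ≤ 1 / ((1 - Γ⁻¹) * π + Γ⁻¹)) ∧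
     (1 / ((1 - Γ) * (1 - π) + Γ) ≤ (1 - ρ) / (1 - π) ∧
      (1 - ρ) / (1 - π) ≤ 1 / ((1 - Γ⁻¹) * (1 - π) + Γ⁻¹))) := by
  obtain ⟨hπ0, hπ1⟩ := hπ
  obtain ⟨hρ0, hρ1⟩ := hρ
  have hπ1' : 0 < 1 - π := by linarith
  have hρ1' : 0 < 1 - ρ := by linarith
  have hΓ0 : (0:ℝ) < Γ := lt_of_lt_of_le one_pos hΓ
  have hΓi : Γ * Γ⁻¹ = 1 := mul_inv_cancel₀ hΓ0.ne'
  have hΓi0 : 0 < Γ⁻¹ := inv_pos.2 hΓ0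
  have d1 : 0 < (1 - Γ) * π + Γ := by nlinarith [mul_pos hΓ0 hπ1']
  have d2 : 0 < (1 - Γ⁻¹) * π + Γ⁻¹ := by nlinarith [mul_pos hΓi0 hπ1']
  have d3 : 0 < (1 - Γ) * (1 - π) + Γ := by nlinarith [mul_pos hΓ0 hπ0]
  have d4 : 0 < (1 - Γ⁻¹) * (1 - π) + Γ⁻¹ := by nlinarith [mul_pos hΓi0 hπ0]
  have dB : 0 < (1 - π) * ρ := mul_pos hπ1' hρ0
  rw [div_le_div_iff₀ hΓ0 dB, div_le_iff₀ dB, div_le_div_iff₀ d1 hπ0,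
    div_le_div_iff₀ hπ0 d2, div_le_div_iff₀ d3 hπ1', div_le_div_iff₀ hπ1' d4]
  constructor
  · rintro ⟨h1, h2⟩
    refine ⟨⟨?_, ?_⟩, ?_, ?_⟩ <;> nlinarith [mul_pos hπ0 hρ0, mul_pos hπ1' hρ1',
      mul_pos hΓi0 hρ0, mul_pos hΓi0 hρ1', mul_le_mul_of_nonneg_left h1 hΓi0.le,
      mul_le_mul_of_nonneg_left h2 hΓi0.le]
  · rintro ⟨⟨h1, h2⟩, h3, h4⟩
    constructor <;> nlinarith [mul_pos hπ0 hρ0, mul_pos hπ1' hρ1',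
      mul_le_mul_of_nonneg_left h2 hΓ0.le, mul_le_mul_of_nonneg_left h4 hΓ0.le]
end

section
/- Let Γ > 1 be real and q ∈ [0,1). Define s⁻ := 1/((1 − Γ)·q + Γ) and s⁺ := 1/((1 − Γ⁻¹)·q + Γ⁻¹). Then: (i) 0 < s⁻ ≤ 1 ≤ s⁺ and s⁻ < s⁺; (ii) (1 − s⁻)·s⁺/(s⁺ − s⁻) = Γ/(1 + Γ); and (iii) (s⁺ − 1)·s⁻/(s⁺ − s⁻) = 1/(1 + Γ). In particular, the thresholds c⁺ and c⁻ of the weighted GMSM do not depend on the weight q. -/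
/-- In the weighted GMSM (Definition 4 of the paper), the bounds `s⁻`, `s⁺` are valid
GMSM constants and the thresholds take the simple form `c⁺ = Γ/(1+Γ)` and
`c⁻ = 1/(1+Γ)`, independently of the weight `q`. -/
theorem weighted_gmsm_thresholds
    (Γ : ℝ) (hΓ : 1 < Γ) (q : ℝ) (hq : q ∈ Set.Ico (0 : ℝ) 1)
    (sm sp : ℝ)
    (hsm : sm = 1 / ((1 - Γ) * q + Γ))
    (hsp : sp = 1 / ((1 - Γ⁻¹) * q + Γ⁻¹)) :
    (0 < sm ∧ sm ≤ 1 ∧ 1 ≤ sp ∧ sm < sp) ∧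
    (1 - sm) * sp / (sp - sm) = Γ / (1 + Γ) ∧
    (sp - 1) * sm / (sp - sm) = 1 / (1 + Γ) := by
  obtain ⟨hq0, hq1⟩ := hq
  have hΓ0 : (0:ℝ) < Γ := by linarith
  have hΓinv : Γ⁻¹ < 1 := by
    rw [inv_lt_one_iff₀]; right; exact hΓ
  have hΓinv0 : (0:ℝ) < Γ⁻¹ := by positivity
  have hq1' : (0:ℝ) < 1 - q := by linarith
  set A : ℝ := (1 - Γ) * q + Γ with hA
  set B : ℝ := (1 - Γ⁻¹) * q + Γ⁻¹ with hB
  have hA1eq : A - 1 = (Γ - 1) * (1 - q) := by rw [hA]; ring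
  have hB1eq : 1 - B = (1 - Γ⁻¹) * (1 - q) := by rw [hB]; ring
  have hA1 : 1 < A := by nlinarith [mul_pos (by linarith : (0:ℝ) < Γ - 1) hq1']
  have hA0 : (0:ℝ) < A := by linarith
  have hB1 : B < 1 := by
    have h := mul_pos (by linarith : (0:ℝ) < 1 - Γ⁻¹) hq1'
    have h2 : (0:ℝ) < 1 - B := lt_of_lt_of_eq h hB1eq.symm
    linarith
  have hB0 : (0:ℝ) < B := by
    have : (0:ℝ) ≤ (1 - Γ⁻¹) * q := mul_nonneg (by linarith) hq0
    rw [hB]; linarith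
  have hBA : B < A := by linarith
  have hABpos : (0:ℝ) < A - B := by linarith
  have hABdiff : A - B = (Γ - Γ⁻¹) * (1 - q) := by
    rw [hA, hB]; ring
  have hsm0 : 0 < sm := by rw [hsm]; positivity
  have hsp1 : 1 ≤ sp := by
    rw [hsp, le_div_iff₀ hB0]; linarith
  have hsm1 : sm ≤ 1 := by
    rw [hsm, div_le_one hA0]; linarith
  have hsmsp : sm < sp := by
    rw [hsm, hsp]
    exact div_lt_div_of_pos_left one_pos hB0 hBA
  have hd1 : (1:ℝ)/B - 1/A ≠ 0 := by
    have : (1:ℝ)/A < 1/B := div_lt_div_of_pos_left one_pos hB0 hBA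
    linarith
  have hΓfac : Γ - Γ⁻¹ = (Γ - 1) * (1 + Γ) / Γ := by
    field_simp; ring
  have hΓ1 : (Γ:ℝ) - 1 ≠ 0 := by linarith
  have h1Γ : (1:ℝ) + Γ ≠ 0 := by linarith
  refine ⟨⟨hsm0, hsm1, hsp1, hsmsp⟩, ?_, ?_⟩
  · have e1 : (1 - sm) * sp / (sp - sm) = (A - 1) / (A - B) := by
      rw [hsm, hsp, div_eq_div_iff hd1 hABpos.ne']
      field_simp
      try ring
      try exact Or.inl trivial
    rw [e1, hA1eq, hABdiff, hΓfac]
    rw [div_eq_div_iff (by positivity) h1Γ]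
    field_simp
  · have e2 : (sp - 1) * sm / (sp - sm) = (1 - B) / (A - B) := by
      rw [hsm, hsp, div_eq_div_iff hd1 hABpos.ne']
      field_simp
      try ring
      try exact Or.inl trivial
    rw [e2, hB1eq, hABdiff, hΓfac]
    rw [div_eq_div_iff (by positivity) h1Γ]
    field_simp
end

section
/- Let s⁻, s⁺ be GMSM constants with threshold c⁺, and let π ∈ (0,1) satisfy π ≤ 1/s⁺. Define h : [0,1] → ℝ by h(u) := 1/s⁺ if u ≤ c⁺ and h(u) := 1/s⁻ otherwise. Then: (i) h is a probability density with respect to Lebesgue measure on [0,1], i.e. h ≥ 0 and ∫₀¹ h(u) du = 1; and (ii) the function u ↦ (h(u) − π)/(1 − π) is also a probability density with respect to Lebesgue measure on [0,1], i.e. it is nonnegative and integrates to 1. -/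
open MeasureTheory

/-- Construction step in the sharpness proof of Theorem 1 for discrete treatments:
the maximally shifted confounder density `h` is a probability density on `[0,1]`,
and under the discrete sharpness condition `π ≤ 1/s⁺` the function
`(h − π)/(1 − π)` is also a probability density on `[0,1]`. -/
theorem gmsm_discrete_sharpness_density
    (sm sp : ℝ) (hsm0 : 0 < sm) (hsm1 : sm ≤ 1) (hsp1 : 1 ≤ sp) (hlt : sm < sp)
    (cp : ℝ) (hcp : cp = (1 - sm) * sp / (sp - sm))
    (π : ℝ) (hπ : π ∈ Set.Ioo (0 : ℝ) 1) (hπs : π ≤ 1 / sp)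
    (h : ℝ → ℝ) (hh : ∀ u, h u = if u ≤ cp then 1 / sp else 1 / sm) :
    ((∀ u, 0 ≤ h u) ∧ ∫ u in Set.Icc (0 : ℝ) 1, h u = 1) ∧
    ((∀ u, 0 ≤ (h u - π) / (1 - π)) ∧
      ∫ u in Set.Icc (0 : ℝ) 1, (h u - π) / (1 - π) = 1) := by
  have hsp0 : (0:ℝ) < sp := lt_of_lt_of_le one_pos hsp1
  have hsub : (0:ℝ) < sp - sm := by linarith
  have hcp0 : 0 ≤ cp := by
    rw [hcp]
    apply div_nonneg _ hsub.le
    nlinarith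
  have hcp1 : cp ≤ 1 := by
    rw [hcp, div_le_one hsub]; nlinarith
  have hge : ∀ u, 1 / sp ≤ h u := by
    intro u
    rw [hh u]
    split_ifs
    · exact le_refl _
    · exact one_div_le_one_div_of_le hsm0 hlt.le
  have hnn : ∀ u, 0 ≤ h u := fun u => le_trans (by positivity) (hge u)
  -- integrability on the two pieces
  have hint1 : IntegrableOn h (Set.Ioc 0 cp) := by
    refine (integrableOn_const (C := 1/sp) (s := Set.Ioc 0 cp) (μ := volume) measure_Ioc_lt_top.ne).congr_fun
      (fun u hu => ?_) measurableSet_Ioc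
    rw [hh u, if_pos hu.2]
  have hint2 : IntegrableOn h (Set.Ioc cp 1) := by
    refine (integrableOn_const (C := 1/sm) (s := Set.Ioc cp 1) (μ := volume) measure_Ioc_lt_top.ne).congr_fun
      (fun u hu => ?_) measurableSet_Ioc
    rw [hh u, if_neg (not_le.2 hu.1)]
  have hunion : Set.Ioc (0:ℝ) cp ∪ Set.Ioc cp 1 = Set.Ioc 0 1 :=
    Set.Ioc_union_Ioc_eq_Ioc hcp0 hcp1
  have hintIoc : IntegrableOn h (Set.Ioc (0:ℝ) 1) := by
    rw [← hunion]; exact hint1.union hint2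
  have hintIcc : IntegrableOn h (Set.Icc (0:ℝ) 1) := by
    rwa [integrableOn_Icc_iff_integrableOn_Ioc]
  have hI1 : ∫ u in Set.Ioc (0:ℝ) cp, h u = cp * (1 / sp) := by
    rw [setIntegral_congr_fun measurableSet_Ioc (g := fun _ => 1 / sp)
      (fun u hu => by rw [hh u, if_pos hu.2]), setIntegral_const, measureReal_def, Real.volume_Ioc,
      smul_eq_mul, ENNReal.toReal_ofReal (by linarith), sub_zero]
  have hI2 : ∫ u in Set.Ioc cp (1:ℝ), h u = (1 - cp) * (1 / sm) := by
    rw [setIntegral_congr_fun measurableSet_Ioc (g := fun _ => 1 / sm)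
      (fun u hu => by rw [hh u, if_neg (not_le.2 hu.1)]), setIntegral_const,
      measureReal_def, Real.volume_Ioc, smul_eq_mul, ENNReal.toReal_ofReal (by linarith)]
  have hint : ∫ u in Set.Icc (0:ℝ) 1, h u = 1 := by
    rw [integral_Icc_eq_integral_Ioc, ← hunion,
      setIntegral_union (Set.Ioc_disjoint_Ioc_of_le le_rfl) measurableSet_Ioc hint1 hint2,
      hI1, hI2, hcp]
    field_simp
    ring
  refine ⟨⟨hnn, hint⟩, ⟨fun u => ?_, ?_⟩⟩
  · apply div_nonneg _ (by linarith [hπ.2])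
    linarith [hge u, hπs]
  · have hπ1 : (1:ℝ) - π ≠ 0 := by linarith [hπ.2]
    have : ∀ u, (h u - π) / (1 - π) = (1 / (1 - π)) * h u - π / (1 - π) := by
      intro u; field_simp
    simp_rw [this]
    rw [integral_sub ((hintIcc.const_mul _)) (integrableOn_const (C := π / (1 - π)) (s := Set.Icc (0:ℝ) 1) (μ := volume) measure_Icc_lt_top.ne),
      integral_const_mul, hint, setIntegral_const, measureReal_def, Real.volume_Icc, smul_eq_mul,
      ENNReal.toReal_ofReal (by norm_num : (0:ℝ) ≤ 1 - 0)]
    field_simp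
    ring
end

section
/- Let p₁ < p₂ be real numbers, let P be a probability measure on ℝ with P([p₁, p₂]) = 1 whose CDF F(y) := P((−∞, y]) is continuous on ℝ and strictly increasing on [p₁, p₂] with F(p₁) = 0 and F(p₂) = 1, and let π ∈ (0,1). For each Γ > 1 let q_Γ ∈ [p₁, p₂] be the unique point with F(q_Γ) = Γ/(1 + Γ), and define Q⁺(Γ) := ((1 − Γ⁻¹)·π + Γ⁻¹)·∫_{(−∞, q_Γ]} y dP(y) + ((1 − Γ)·π + Γ)·∫_{(q_Γ, ∞)} y dP(y). Then lim_{Γ → ∞} Q⁺(Γ) = π·∫ y dP(y) + (1 − π)·p₂. -/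
open MeasureTheory Filter

/-- Appendix A of the paper: as `Γ → ∞`, i.e. when the sensitivity constraint of the
MSM is lifted, the sharp upper bound `Q⁺(Γ)` on the mean converges to Manski's
no-assumptions bound `π·E[Y] + (1 − π)·p₂`. -/
theorem msm_bound_tendsto_manski
    (p₁ p₂ : ℝ) (hp : p₁ < p₂)
    (P : Measure ℝ) [IsProbabilityMeasure P]
    (hsupp : P (Set.Icc p₁ p₂) = 1)
    (F : ℝ → ℝ) (hF : ∀ y, F y = (P (Set.Iic y)).toReal)
    (hFc : Continuous F)
    (hFmono : StrictMonoOn F (Set.Icc p₁ p₂))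
    (hF1 : F p₁ = 0) (hF2 : F p₂ = 1)
    (π : ℝ) (hπ : π ∈ Set.Ioo (0 : ℝ) 1)
    (q : ℝ → ℝ)
    (hq : ∀ Γ : ℝ, 1 < Γ → q Γ ∈ Set.Icc p₁ p₂ ∧ F (q Γ) = Γ / (1 + Γ))
    (Qp : ℝ → ℝ)
    (hQp : ∀ Γ : ℝ, Qp Γ =
      ((1 - Γ⁻¹) * π + Γ⁻¹) * (∫ y in Set.Iic (q Γ), y ∂P) +
      ((1 - Γ) * π + Γ) * (∫ y in Set.Ioi (q Γ), y ∂P)) :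
    Tendsto Qp atTop (nhds (π * (∫ y, y ∂P) + (1 - π) * p₂)) := by
  obtain ⟨hπ0, hπ1⟩ := hπ
  set M : ℝ := max |p₁| |p₂| with hM
  have hae : ∀ᵐ y ∂P, y ∈ Set.Icc p₁ p₂ :=
    (mem_ae_iff_prob_eq_one measurableSet_Icc).2 hsupp
  have haebd : ∀ᵐ y ∂P, ‖y‖ ≤ M := by
    filter_upwards [hae] with y hy
    rw [Real.norm_eq_abs]
    exact abs_le_max_abs_abs hy.1 hy.2
  have hint : Integrable (fun y : ℝ => y) P := by
    refine (integrable_const M).mono' aestronglyMeasurable_id ?_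
    filter_upwards [haebd] with y hy
    exact hy
  -- limit of 1/(1+Γ)
  have hg : Tendsto (fun Γ : ℝ => (1 + Γ)⁻¹) atTop (nhds 0) :=
    Tendsto.inv_tendsto_atTop (tendsto_atTop_add_const_left atTop 1 tendsto_id)
  have hratio : Tendsto (fun Γ : ℝ => Γ / (1 + Γ)) atTop (nhds 1) := by
    have h1 : Tendsto (fun Γ : ℝ => 1 - (1 + Γ)⁻¹) atTop (nhds (1 - 0)) :=
      tendsto_const_nhds.sub hg
    rw [sub_zero] at h1
    refine h1.congr' ?_
    filter_upwards [eventually_gt_atTop (0 : ℝ)] with Γ hΓ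
    have : (1 : ℝ) + Γ ≠ 0 := by linarith
    field_simp
    ring
  -- measure of the upper tail
  have hμ : ∀ Γ : ℝ, 1 < Γ → (P (Set.Ioi (q Γ))).toReal = (1 + Γ)⁻¹ := by
    intro Γ hΓ
    have h1Γ : (1 : ℝ) + Γ ≠ 0 := by linarith
    have hc : Set.Ioi (q Γ) = (Set.Iic (q Γ))ᶜ := Set.compl_Iic.symm
    rw [hc, prob_compl_eq_one_sub measurableSet_Iic,
      ENNReal.toReal_sub_of_le prob_le_one (by simp), ENNReal.toReal_one, ← hF,
      (hq Γ hΓ).2]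
    field_simp
    ring
  -- tail integral tends to 0
  set T : ℝ → ℝ := fun Γ => ∫ y in Set.Ioi (q Γ), y ∂P with hT
  have hTbd : ∀ Γ : ℝ, 1 < Γ → ‖T Γ‖ ≤ M * (1 + Γ)⁻¹ := by
    intro Γ hΓ
    have := norm_setIntegral_le_of_norm_le_const_ae (μ := P) (s := Set.Ioi (q Γ))
      (f := fun y : ℝ => y) (measure_lt_top _ _) (ae_restrict_of_ae haebd)
    rwa [measureReal_def, hμ Γ hΓ] at this
  have hT0 : Tendsto T atTop (nhds 0) := by
    refine squeeze_zero_norm' (a := fun Γ : ℝ => M * (1 + Γ)⁻¹) ?_ ?_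
    · filter_upwards [eventually_gt_atTop (1 : ℝ)] with Γ hΓ using hTbd Γ hΓ
    · have := hg.const_mul M
      rwa [mul_zero] at this
  -- q Γ → p₂
  have hqT : Tendsto q atTop (nhds p₂) := by
    refine tendsto_order.2 ⟨?_, ?_⟩
    · intro a ha
      by_cases hap : a < p₁
      · filter_upwards [eventually_gt_atTop (1 : ℝ)] with Γ hΓ
        exact hap.trans_le (hq Γ hΓ).1.1
      · push_neg at hap
        have haI : a ∈ Set.Icc p₁ p₂ := ⟨hap, ha.le⟩
        have hFa : F a < 1 := by
          rw [← hF2]; exact hFmono haI ⟨hp.le, le_rfl⟩ ha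
        filter_upwards [eventually_gt_atTop (1 : ℝ),
          hratio.eventually (eventually_gt_nhds hFa)] with Γ hΓ hgt
        by_contra h
        push_neg at h
        have hle : F (q Γ) ≤ F a := hFmono.monotoneOn (hq Γ hΓ).1 haI h
        rw [(hq Γ hΓ).2] at hle
        linarith
    · intro a ha
      filter_upwards [eventually_gt_atTop (1 : ℝ)] with Γ hΓ
      exact ((hq Γ hΓ).1.2).trans_lt ha
  -- split of the integral
  set I : ℝ := ∫ y, y ∂P with hI
  have hsplit : ∀ Γ : ℝ, 1 < Γ →
      (∫ y in Set.Iic (q Γ), y ∂P) = I - T Γ := by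
    intro Γ hΓ
    have := intervalIntegral.integral_Iic_add_Ioi (μ := P) (f := fun y : ℝ => y) (b := q Γ)
      hint.integrableOn hint.integrableOn
    simp only [hT, hI]
    linarith [this]
  -- first term
  have hc₁ : Tendsto (fun Γ : ℝ => (1 - Γ⁻¹) * π + Γ⁻¹) atTop (nhds π) := by
    have h1 : Tendsto (fun Γ : ℝ => (1 - Γ⁻¹) * π + Γ⁻¹) atTop
        (nhds ((1 - 0) * π + 0)) :=
      ((tendsto_const_nhds.sub tendsto_inv_atTop_zero).mul tendsto_const_nhds).add
        tendsto_inv_atTop_zero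
    simpa using h1
  have hA : Tendsto (fun Γ : ℝ => ((1 - Γ⁻¹) * π + Γ⁻¹) * (I - T Γ)) atTop
      (nhds (π * I)) := by
    have := hc₁.mul (tendsto_const_nhds.sub hT0 (f := fun _ : ℝ => I))
    simpa using this
  -- coefficient of the second term divided by (1+Γ)
  have hcoef : Tendsto (fun Γ : ℝ => ((1 - Γ) * π + Γ) * (1 + Γ)⁻¹) atTop
      (nhds (1 - π)) := by
    have h1 : Tendsto (fun Γ : ℝ => (1 - π) + (2 * π - 1) * (1 + Γ)⁻¹) atTop
        (nhds ((1 - π) + (2 * π - 1) * 0)) :=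
      tendsto_const_nhds.add (tendsto_const_nhds.mul hg)
    rw [mul_zero, add_zero] at h1
    refine h1.congr' ?_
    filter_upwards [eventually_gt_atTop (0 : ℝ)] with Γ hΓ
    have : (1 : ℝ) + Γ ≠ 0 := by linarith
    field_simp
    ring
  -- second term via squeeze
  have hB : Tendsto (fun Γ : ℝ => ((1 - Γ) * π + Γ) * T Γ) atTop
      (nhds ((1 - π) * p₂)) := by
    have hL : Tendsto (fun Γ : ℝ => (((1 - Γ) * π + Γ) * (1 + Γ)⁻¹) * q Γ) atTop
        (nhds ((1 - π) * p₂)) := hcoef.mul hqT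
    have hU : Tendsto (fun Γ : ℝ => (((1 - Γ) * π + Γ) * (1 + Γ)⁻¹) * p₂) atTop
        (nhds ((1 - π) * p₂)) := hcoef.mul tendsto_const_nhds
    refine tendsto_of_tendsto_of_tendsto_of_le_of_le' hL hU ?_ ?_
    · filter_upwards [eventually_gt_atTop (1 : ℝ)] with Γ hΓ
      have hc₂ : (0 : ℝ) ≤ (1 - Γ) * π + Γ := by nlinarith
      have hge : q Γ * (P (Set.Ioi (q Γ))).toReal ≤ T Γ := by
        have := setIntegral_ge_of_const_le_real measurableSet_Ioi (measure_ne_top _ _)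
          (fun x hx => le_of_lt hx) hint.integrableOn (c := q Γ)
        rw [measureReal_def] at this
        exact this
      rw [hμ Γ hΓ] at hge
      calc (((1 - Γ) * π + Γ) * (1 + Γ)⁻¹) * q Γ
          = ((1 - Γ) * π + Γ) * (q Γ * (1 + Γ)⁻¹) := by ring
        _ ≤ ((1 - Γ) * π + Γ) * T Γ := mul_le_mul_of_nonneg_left hge hc₂
    · filter_upwards [eventually_gt_atTop (1 : ℝ)] with Γ hΓ
      have hc₂ : (0 : ℝ) ≤ (1 - Γ) * π + Γ := by nlinarith
      have hle : T Γ ≤ p₂ * (P (Set.Ioi (q Γ))).toReal := by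
        have h1 : T Γ ≤ ∫ _ in Set.Ioi (q Γ), p₂ ∂P := by
          refine setIntegral_mono_ae hint.integrableOn (integrable_const p₂).integrableOn ?_
          filter_upwards [hae] with y hy using hy.2
        rw [setIntegral_const, smul_eq_mul, mul_comm] at h1
        exact h1
      rw [hμ Γ hΓ] at hle
      calc ((1 - Γ) * π + Γ) * T Γ
          ≤ ((1 - Γ) * π + Γ) * (p₂ * (1 + Γ)⁻¹) := mul_le_mul_of_nonneg_left hle hc₂
        _ = (((1 - Γ) * π + Γ) * (1 + Γ)⁻¹) * p₂ := by ring
  -- combine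
  have hfin := hA.add hB
  refine hfin.congr' ?_
  filter_upwards [eventually_gt_atTop (1 : ℝ)] with Γ hΓ
  rw [hQp Γ, hsplit Γ hΓ]
end

section
/- Let T ≥ 1, let X be a finite nonempty type and let U_t, A_t (t = 1, …, T) be finite nonempty types. Let p be a strictly positive probability mass function on X × U₁ × ⋯ × U_T × A₁ × ⋯ × A_T. For tuples write ū_t = (u₁, …, u_t) and ā_t = (a₁, …, a_t), and define all conditional probability mass functions as ratios of marginal sums of p (e.g. p(a_t | x, ū_t, ā_{t−1}) is the marginal probability of (x, ū_t, ā_t) divided by the marginal probability of (x, ū_t, ā_{t−1})). Then for all x, ū_T, ā_T: p(ū_T | x, ā_T) = [ ∏_{t=1}^{T} p(a_t | x, ū_t, ā_{t−1}) / p(a_t | x, ā_{t−1}) ] · ∏_{t=1}^{T} p(u_t | x, ū_{t−1}, ā_{t−1}). -/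
private lemma telescope_aux (f : ℕ → ℝ) (hf : ∀ k, f k ≠ 0) :
    ∀ n : ℕ, ∏ i ∈ Finset.range n, f (i + 1) / f i = f n / f 0 := by
  intro n
  induction n with
  | zero => simp [div_self (hf 0)]
  | succ n ih =>
    have h0 := hf 0
    have h1 := hf n
    have h2 := hf (n + 1)
    rw [Finset.prod_range_succ, ih]
    field_simp

/- Telescoping identity of Appendix C.3 of the paper (repeated Bayes' theorem),
underlying the fact that the LMSM is a weighted GMSM with weight `q ≡ 0`.
Here `M x t s u a` is the marginal probability of observing `x`, the first `t`
coordinates of the confounders `u`, and the first `s` coordinates of the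
treatments `a`, so that e.g. `p(a_t | x, ū_t, ā_{t−1}) = M x (t) (t) / M x (t) (t-1)`
(with 1-based time `t` corresponding to prefix length `t`). -/
open scoped Classical in
theorem lmsm_telescoping
    (T : ℕ) (hT : 1 ≤ T)
    (X : Type*) [Fintype X] [Nonempty X]
    (U A : Fin T → Type*) [∀ t, Fintype (U t)] [∀ t, Nonempty (U t)]
    [∀ t, Fintype (A t)] [∀ t, Nonempty (A t)]
    (p : X → (∀ t, U t) → (∀ t, A t) → ℝ)
    (hpos : ∀ x u a, 0 < p x u a)
    (hsum : ∑ x : X, ∑ u : ∀ t, U t, ∑ a : ∀ t, A t, p x u a = 1)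
    (M : X → ℕ → ℕ → (∀ t, U t) → (∀ t, A t) → ℝ)
    (hM : ∀ x t s u a, M x t s u a =
      ∑ u' : ∀ i, U i, ∑ a' : ∀ i, A i,
        if (∀ i : Fin T, (i : ℕ) < t → u' i = u i) ∧
           (∀ i : Fin T, (i : ℕ) < s → a' i = a i)
        then p x u' a' else 0) :
    ∀ (x : X) (u : ∀ t, U t) (a : ∀ t, A t),
      M x T T u a / M x 0 T u a =
        (∏ i : Fin T,
          (M x ((i : ℕ) + 1) ((i : ℕ) + 1) u a / M x ((i : ℕ) + 1) (i : ℕ) u a) /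
          (M x 0 ((i : ℕ) + 1) u a / M x 0 (i : ℕ) u a)) *
        ∏ i : Fin T, M x ((i : ℕ) + 1) (i : ℕ) u a / M x (i : ℕ) (i : ℕ) u a := by
  intro x u a
  have hMpos : ∀ t s, 0 < M x t s u a := by
    intro t s
    rw [hM]
    apply Finset.sum_pos'
    · intro u' _
      apply Finset.sum_nonneg
      intro a' _
      split
      · exact (hpos _ _ _).le
      · exact le_refl 0
    · refine ⟨u, Finset.mem_univ _, ?_⟩
      apply Finset.sum_pos'
      · intro a' _
        split
        · exact (hpos _ _ _).le
        · exact le_refl 0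
      · refine ⟨a, Finset.mem_univ _, ?_⟩
        rw [if_pos ⟨fun i _ => rfl, fun i _ => rfl⟩]
        exact hpos _ _ _
  have hMne : ∀ t s, M x t s u a ≠ 0 := fun t s => (hMpos t s).ne'
  have key : ∀ i : Fin T,
      (M x ((i : ℕ) + 1) ((i : ℕ) + 1) u a / M x ((i : ℕ) + 1) (i : ℕ) u a) /
        (M x 0 ((i : ℕ) + 1) u a / M x 0 (i : ℕ) u a) *
        (M x ((i : ℕ) + 1) (i : ℕ) u a / M x (i : ℕ) (i : ℕ) u a) =
      (M x ((i : ℕ) + 1) ((i : ℕ) + 1) u a / M x (i : ℕ) (i : ℕ) u a) *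
        (M x 0 ((i : ℕ) + 1) u a / M x 0 (i : ℕ) u a)⁻¹ := by
    intro i
    have h1 := hMne ((i : ℕ) + 1) ((i : ℕ) + 1)
    have h2 := hMne ((i : ℕ) + 1) (i : ℕ)
    have h3 := hMne 0 ((i : ℕ) + 1)
    have h4 := hMne 0 (i : ℕ)
    have h5 := hMne (i : ℕ) (i : ℕ)
    field_simp
  rw [← Finset.prod_mul_distrib]
  simp_rw [key]
  rw [Finset.prod_mul_distrib, Finset.prod_inv_distrib]
  have h1 : ∏ i : Fin T, M x ((i : ℕ) + 1) ((i : ℕ) + 1) u a / M x (i : ℕ) (i : ℕ) u a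
      = M x T T u a / M x 0 0 u a := by
    rw [Fin.prod_univ_eq_prod_range (fun i => M x (i + 1) (i + 1) u a / M x i i u a) T]
    exact telescope_aux (fun k => M x k k u a) (fun k => hMne k k) T
  have h2 : ∏ i : Fin T, M x 0 ((i : ℕ) + 1) u a / M x 0 (i : ℕ) u a
      = M x 0 T u a / M x 0 0 u a := by
    rw [Fin.prod_univ_eq_prod_range (fun i => M x 0 (i + 1) u a / M x 0 i u a) T]
    exact telescope_aux (fun k => M x 0 k u a) (fun k => hMne 0 k) T
  rw [h1, h2]
  have h0 := hMne 0 0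
  have hT' := hMne 0 T
  field_simp
end
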